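/- arXiv:2605.08719 — 7 statements merged into one kernel-verified Lean document; each statement's English description precedes it below -/
import Mathlib

section
/- Let n ≥ 3 and let β be a bivariate truncated moment sequence of degree 2n whose moment matrix M(n) is positive semidefinite and p-pure, where p(x,y) = y² − x³ − ax − b. Then the function R : ℝ → ℝ defined in the context is a polynomial of degree at most 2 in θ; that is, there exist R₀, R₁, R₂ ∈ ℝ such that R(θ) = R₂θ² + R₁θ + R₀ for all θ ∈ ℝ. -/
open MeasureTheory Matrix

noncomputable section

/-- Index type for monomials `x^i y^j` with `i + j ≤ n`. -/
abbrev MIdx (n : ℕ) : Type := {p : Fin (n+1) × Fin (n+1) // (p.1 : ℕ) + (p.2 : ℕ) ≤ n}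

/-- The moment matrix `M(n)` of a bivariate truncated moment sequence `β`. -/
def momentMatrix (n : ℕ) (β : ℕ → ℕ → ℝ) : Matrix (MIdx n) (MIdx n) ℝ :=
  fun p q => β ((p.1.1 : ℕ) + (q.1.1 : ℕ)) ((p.1.2 : ℕ) + (q.1.2 : ℕ))

/-- Coefficient vector (w.r.t. monomials of degree ≤ n) of `x^i y^j * (y² - x³ - a x - b)`. -/
def pureVec (n : ℕ) (a b : ℝ) (i j : ℕ) : MIdx n → ℝ := fun q =>
  (if (q.1.1 : ℕ) = i ∧ (q.1.2 : ℕ) = j + 2 then (1:ℝ) else 0)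
    - (if (q.1.1 : ℕ) = i + 3 ∧ (q.1.2 : ℕ) = j then (1:ℝ) else 0)
    - a * (if (q.1.1 : ℕ) = i + 1 ∧ (q.1.2 : ℕ) = j then (1:ℝ) else 0)
    - b * (if (q.1.1 : ℕ) = i ∧ (q.1.2 : ℕ) = j then (1:ℝ) else 0)

/-- `M(n)` is `p`-pure for `p(x,y) = y² - x³ - a x - b`: the kernel of `M(n)` is spanned by
the coefficient vectors of `x^i y^j p(x,y)`, `i + j ≤ n - 3`. -/
def IsPPure (n : ℕ) (a b : ℝ) (β : ℕ → ℕ → ℝ) : Prop :=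
  {v : MIdx n → ℝ | (momentMatrix n β).mulVec v = 0} =
    (Submodule.span ℝ {v : MIdx n → ℝ | ∃ i j : ℕ, i + j + 3 ≤ n ∧ v = pureVec n a b i j} :
      Set (MIdx n → ℝ))

/-- Extension of `β` to degree `2n+1`: degree `2n+1` moments with first index `≥ 3` are
determined recursively; `θ = β_{2,2n-1}`, `φ = β_{1,2n}`, `ψ = β_{0,2n+1}` are parameters. -/
def betaExt (n : ℕ) (a b : ℝ) (β : ℕ → ℕ → ℝ) (θ φ ψ : ℝ) : ℕ → ℕ → ℝ := fun i j =>
  if i + j ≤ 2*n then β i j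
  else if i + j = 2*n + 1 then
    if i = 0 then ψ else if i = 1 then φ else if i = 2 then θ
    else β (i-3) (j+2) - a * β (i-2) j - b * β (i-3) j
  else 0

/-- The basis `B = {1, x, y} ∪ ⋃_{k=2}^n {x² y^{k-2}, x y^{k-1}, y^k}`, i.e. the monomials
`x^i y^j` with `i ≤ 2`, `i + j ≤ n`. -/
abbrev BIdx (n : ℕ) : Type := {q : MIdx n // (q.1.1 : ℕ) ≤ 2}

/-- The compression `[M(n)]_B`. -/
def MB (n : ℕ) (β : ℕ → ℕ → ℝ) : Matrix (BIdx n) (BIdx n) ℝ :=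
  fun p q => momentMatrix n β p.1 q.1

/-- The vector `[x^s y^t]_B = (β_{s+i, t+j})_{x^i y^j ∈ B}`. -/
def colB (n : ℕ) (βe : ℕ → ℕ → ℝ) (s t : ℕ) : BIdx n → ℝ :=
  fun q => βe (s + (q.1.1.1 : ℕ)) (t + (q.1.1.2 : ℕ))

/-- `φ*(θ)`. -/
def phiStar (n : ℕ) (a b : ℝ) (β : ℕ → ℕ → ℝ) (θ : ℝ) : ℝ :=
  dotProduct (colB n (betaExt n a b β θ 0 0) 2 (n-1))
      ((MB n β)⁻¹.mulVec (colB n (betaExt n a b β θ 0 0) 2 (n-1)))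
    + a * β 2 (2*n-2) + b * β 1 (2*n-2)

/-- `ψ*(θ, φ)`. -/
def psiStar (n : ℕ) (a b : ℝ) (β : ℕ → ℕ → ℝ) (θ φ : ℝ) : ℝ :=
  dotProduct (colB n (betaExt n a b β θ φ 0) 1 n)
      ((MB n β)⁻¹.mulVec (colB n (betaExt n a b β θ φ 0) 2 (n-1)))
    + a * β 1 (2*n-1) + b * β 0 (2*n-1)

/-- `Q(θ, φ, ψ)`. -/
def Qfun (n : ℕ) (a b : ℝ) (β : ℕ → ℕ → ℝ) (θ φ ψ : ℝ) : ℝ :=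
  dotProduct (colB n (betaExt n a b β θ φ ψ) 0 (n+1))
      ((MB n β)⁻¹.mulVec (colB n (betaExt n a b β θ φ ψ) 2 (n-1)))
    - dotProduct (colB n (betaExt n a b β θ φ ψ) 1 n)
      ((MB n β)⁻¹.mulVec (colB n (betaExt n a b β θ φ ψ) 1 n))

/-- `R(θ) = Q(θ, φ*(θ), ψ*(θ, φ*(θ)))`. -/
def Rfun (n : ℕ) (a b : ℝ) (β : ℕ → ℕ → ℝ) (θ : ℝ) : ℝ :=
  Qfun n a b β θ (phiStar n a b β θ) (psiStar n a b β θ (phiStar n a b β θ))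

/-! ### Auxiliary material for the proof -/

/-- The abstract algebraic fact: for a symmetric bilinear form, the function
`θ ↦ Q(θ, φ*(θ), ψ*(θ, φ*(θ)))` built from affine families of vectors is a quadratic
polynomial in `θ`. -/
lemma quad_aux {ι : Type} [Fintype ι] (N : Matrix ι ι ℝ)
    (hsym : ∀ x y : ι → ℝ, x ⬝ᵥ N *ᵥ y = y ⬝ᵥ N *ᵥ x)
    (u v w e f g : ι → ℝ) (A B : ℝ) :
    ∃ R0 R1 R2 : ℝ, ∀ θ φ ψ : ℝ,
      φ = (v + θ • e) ⬝ᵥ N *ᵥ (v + θ • e) + A →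
      ψ = (w + θ • f + φ • e) ⬝ᵥ N *ᵥ (v + θ • e) + B →
      (u + θ • g + φ • f + ψ • e) ⬝ᵥ N *ᵥ (v + θ • e)
        - (w + θ • f + φ • e) ⬝ᵥ N *ᵥ (w + θ • f + φ • e)
      = R2 * θ ^ 2 + R1 * θ + R0 := by
  refine ⟨
    -(A*A*(e ⬝ᵥ N *ᵥ e)) - 2*(A*(e ⬝ᵥ N *ᵥ e)*(v ⬝ᵥ N *ᵥ v)) + A*(e ⬝ᵥ N *ᵥ v)*(e ⬝ᵥ N *ᵥ v)
      - 2*(A*(e ⬝ᵥ N *ᵥ w)) + A*(f ⬝ᵥ N *ᵥ v) + B*(e ⬝ᵥ N *ᵥ v)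
      - (e ⬝ᵥ N *ᵥ e)*(v ⬝ᵥ N *ᵥ v)*(v ⬝ᵥ N *ᵥ v)
      + (e ⬝ᵥ N *ᵥ v)*(e ⬝ᵥ N *ᵥ v)*(v ⬝ᵥ N *ᵥ v) + (e ⬝ᵥ N *ᵥ v)*(w ⬝ᵥ N *ᵥ v)
      - 2*((e ⬝ᵥ N *ᵥ w)*(v ⬝ᵥ N *ᵥ v)) + (f ⬝ᵥ N *ᵥ v)*(v ⬝ᵥ N *ᵥ v)
      + (u ⬝ᵥ N *ᵥ v) - (w ⬝ᵥ N *ᵥ w),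
    -(2*(A*(e ⬝ᵥ N *ᵥ e)*(e ⬝ᵥ N *ᵥ v))) - A*(e ⬝ᵥ N *ᵥ f) + B*(e ⬝ᵥ N *ᵥ e)
      - 2*((e ⬝ᵥ N *ᵥ e)*(e ⬝ᵥ N *ᵥ v)*(v ⬝ᵥ N *ᵥ v)) + (e ⬝ᵥ N *ᵥ e)*(w ⬝ᵥ N *ᵥ v)
      - (e ⬝ᵥ N *ᵥ f)*(v ⬝ᵥ N *ᵥ v) + 2*((e ⬝ᵥ N *ᵥ v)*(e ⬝ᵥ N *ᵥ v)*(e ⬝ᵥ N *ᵥ v))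
      - 3*((e ⬝ᵥ N *ᵥ v)*(e ⬝ᵥ N *ᵥ w)) + 3*((e ⬝ᵥ N *ᵥ v)*(f ⬝ᵥ N *ᵥ v))
      - 2*(f ⬝ᵥ N *ᵥ w) + (g ⬝ᵥ N *ᵥ v) + (u ⬝ᵥ N *ᵥ e),
    -(A*(e ⬝ᵥ N *ᵥ e)*(e ⬝ᵥ N *ᵥ e)) - (e ⬝ᵥ N *ᵥ e)*(e ⬝ᵥ N *ᵥ e)*(v ⬝ᵥ N *ᵥ v)
      + (e ⬝ᵥ N *ᵥ e)*(e ⬝ᵥ N *ᵥ v)*(e ⬝ᵥ N *ᵥ v) - (e ⬝ᵥ N *ᵥ e)*(e ⬝ᵥ N *ᵥ w)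
      + 2*((e ⬝ᵥ N *ᵥ e)*(f ⬝ᵥ N *ᵥ v)) - (e ⬝ᵥ N *ᵥ f)*(e ⬝ᵥ N *ᵥ v)
      - (f ⬝ᵥ N *ᵥ f) + (g ⬝ᵥ N *ᵥ e), ?_⟩
  intro θ φ ψ hφ hψ
  subst hψ
  subst hφ
  simp only [Matrix.mulVec_add, Matrix.mulVec_smul, dotProduct_add,
    add_dotProduct, smul_dotProduct, dotProduct_smul, smul_eq_mul]
  simp only [hsym v e, hsym w e, hsym w f, hsym f e]
  ring

/-- The extended sequence decomposes as the `(θ,φ,ψ) = (0,0,0)` part plus indicator terms. -/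
lemma betaExt_decomp (n : ℕ) (hn : 3 ≤ n) (a b : ℝ) (β : ℕ → ℕ → ℝ) (θ φ ψ : ℝ) (i j : ℕ) :
    betaExt n a b β θ φ ψ i j =
      betaExt n a b β 0 0 0 i j
        + θ * (if i = 2 ∧ j = 2*n - 1 then 1 else 0)
        + φ * (if i = 1 ∧ j = 2*n then 1 else 0)
        + ψ * (if i = 0 ∧ j = 2*n + 1 then 1 else 0) := by
  simp only [betaExt]
  split_ifs <;> first | ring1 | (exfalso; omega)

/-- Indicator vector of the monomial `y^n` in `B`. -/
def eVec (n : ℕ) : BIdx n → ℝ := fun q =>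
  if (q.1.1.1 : ℕ) = 0 ∧ (q.1.1.2 : ℕ) = n then 1 else 0

/-- Indicator vector of the monomial `x y^{n-1}` in `B`. -/
def fVec (n : ℕ) : BIdx n → ℝ := fun q =>
  if (q.1.1.1 : ℕ) = 1 ∧ (q.1.1.2 : ℕ) = n - 1 then 1 else 0

/-- Indicator vector of the monomial `x² y^{n-2}` in `B`. -/
def gVec (n : ℕ) : BIdx n → ℝ := fun q =>
  if (q.1.1.1 : ℕ) = 2 ∧ (q.1.1.2 : ℕ) = n - 2 then 1 else 0

lemma colB_two (n : ℕ) (hn : 3 ≤ n) (a b : ℝ) (β : ℕ → ℕ → ℝ) (θ φ ψ : ℝ) :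
    colB n (betaExt n a b β θ φ ψ) 2 (n-1)
      = colB n (betaExt n a b β 0 0 0) 2 (n-1) + θ • eVec n := by
  funext q
  simp only [colB, Pi.add_apply, Pi.smul_apply, smul_eq_mul, eVec]
  rw [betaExt_decomp n hn]
  split_ifs <;> first | ring1 | (exfalso; omega)

lemma colB_one (n : ℕ) (hn : 3 ≤ n) (a b : ℝ) (β : ℕ → ℕ → ℝ) (θ φ ψ : ℝ) :
    colB n (betaExt n a b β θ φ ψ) 1 n
      = colB n (betaExt n a b β 0 0 0) 1 n + θ • fVec n + φ • eVec n := by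
  funext q
  simp only [colB, Pi.add_apply, Pi.smul_apply, smul_eq_mul, eVec, fVec]
  rw [betaExt_decomp n hn]
  split_ifs <;> first | ring1 | (exfalso; omega)

lemma colB_zero (n : ℕ) (hn : 3 ≤ n) (a b : ℝ) (β : ℕ → ℕ → ℝ) (θ φ ψ : ℝ) :
    colB n (betaExt n a b β θ φ ψ) 0 (n+1)
      = colB n (betaExt n a b β 0 0 0) 0 (n+1) + θ • gVec n + φ • fVec n + ψ • eVec n := by
  funext q
  simp only [colB, Pi.add_apply, Pi.smul_apply, smul_eq_mul, eVec, fVec, gVec]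
  rw [betaExt_decomp n hn]
  split_ifs <;> first | ring1 | (exfalso; omega)

/-- If `M(n)` is positive semidefinite and `p`-pure, then `R` is a
polynomial of degree at most `2` in `θ`. -/
theorem R_is_quadratic (n : ℕ) (hn : 3 ≤ n) (a b : ℝ) (β : ℕ → ℕ → ℝ)
    (hpsd : (momentMatrix n β).PosSemidef) (hpure : IsPPure n a b β) :
    ∃ R0 R1 R2 : ℝ, ∀ θ : ℝ, Rfun n a b β θ = R2 * θ^2 + R1 * θ + R0 := by
  have hMB : (MB n β)ᵀ = MB n β := by
    ext p q
    simp [MB, Matrix.transpose_apply, momentMatrix, Nat.add_comm]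
  have hNt : ((MB n β)⁻¹)ᵀ = (MB n β)⁻¹ := by
    rw [Matrix.transpose_nonsing_inv, hMB]
  have hsym : ∀ x y : BIdx n → ℝ, x ⬝ᵥ (MB n β)⁻¹ *ᵥ y = y ⬝ᵥ (MB n β)⁻¹ *ᵥ x := by
    intro x y
    conv_lhs => rw [Matrix.dotProduct_mulVec, ← hNt, Matrix.vecMul_transpose,
      dotProduct_comm]
  obtain ⟨R0, R1, R2, h⟩ := quad_aux ((MB n β)⁻¹) hsym
    (colB n (betaExt n a b β 0 0 0) 0 (n+1))
    (colB n (betaExt n a b β 0 0 0) 2 (n-1))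
    (colB n (betaExt n a b β 0 0 0) 1 n)
    (eVec n) (fVec n) (gVec n)
    (a * β 2 (2*n-2) + b * β 1 (2*n-2))
    (a * β 1 (2*n-1) + b * β 0 (2*n-1))
  refine ⟨R0, R1, R2, fun θ => ?_⟩
  have hφ : phiStar n a b β θ
      = (colB n (betaExt n a b β 0 0 0) 2 (n-1) + θ • eVec n) ⬝ᵥ
          (MB n β)⁻¹ *ᵥ (colB n (betaExt n a b β 0 0 0) 2 (n-1) + θ • eVec n)
        + (a * β 2 (2*n-2) + b * β 1 (2*n-2)) := by
    unfold phiStar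
    rw [colB_two n hn a b β θ 0 0]
    ring
  have hψ : psiStar n a b β θ (phiStar n a b β θ)
      = (colB n (betaExt n a b β 0 0 0) 1 n + θ • fVec n + (phiStar n a b β θ) • eVec n) ⬝ᵥ
          (MB n β)⁻¹ *ᵥ (colB n (betaExt n a b β 0 0 0) 2 (n-1) + θ • eVec n)
        + (a * β 1 (2*n-1) + b * β 0 (2*n-1)) := by
    unfold psiStar
    rw [colB_one n hn a b β θ (phiStar n a b β θ) 0, colB_two n hn a b β θ (phiStar n a b β θ) 0]
    ring
  have hmain := h θ (phiStar n a b β θ) (psiStar n a b β θ (phiStar n a b β θ)) hφ hψ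
  unfold Rfun Qfun
  rw [colB_zero n hn a b β θ (phiStar n a b β θ) (psiStar n a b β θ (phiStar n a b β θ)),
    colB_two n hn a b β θ (phiStar n a b β θ) (psiStar n a b β θ (phiStar n a b β θ)),
    colB_one n hn a b β θ (phiStar n a b β θ) (psiStar n a b β θ (phiStar n a b β θ))]
  exact hmain

end
end

section
/- Let n ≥ 3 and let β be a bivariate truncated moment sequence of degree 2n whose moment matrix M(n) is positive semidefinite and p-pure, where p(x,y) = y² − x³ − ax − b and Z(p) = {(x,y) ∈ ℝ² : p(x,y) = 0}. Then β admits a (rank M(n))-atomic Z(p)-representing measure if and only if M(n) admits a flat extension M(n+1). -/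
/-!
If `μ = ∑ cₖ δ_{zₖ}` represents `β`, the moments of `μ` of degree `2n + 2` give an extension with
`M(n+1) = (D V)ᵀ (D V)`, where `V` evaluates monomials at the atoms and `D = diag(√cₖ)`; hence
`M(n+1)` is positive semidefinite of rank at most `r = rank M(n)`, and flat.

Conversely, write a flat extension as a Gram matrix, `fᵀ M(n+1) g = ⟪G f, G g⟫`. Flatness says
that every vector of `E = range G` is `G f` for a polynomial `f` of degree `≤ n`; moving `x` or
`y` across the moment matrix then shows that the kernel of `M(n+1)` is stable under
multiplication by `x` and `y` on such `f`. So multiplication by `x` and by `y` descends to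
operators `X`, `Y` on `E`, which are symmetric and commute because their matrix entries are
moments. Decomposing `G 1` along the joint eigenspaces of `X` and `Y` gives `dim E = rank M(n)`
orthogonal joint eigenvectors, whose eigenvalue pairs are the atoms and whose squared norms are
the weights. Finally `p` lies in the kernel of `M(n)`, so it vanishes at every atom.
-/

open MeasureTheory Matrix

noncomputable section

/-- `μ` is a `K`-representing measure for the degree-`d` truncated moment sequence `β`:
a positive Borel measure on `ℝ²` with `supp μ ⊆ K` (for closed `K`, equivalently
`μ(Kᶜ) = 0`) whose moments of degree ≤ `d` are the `β_{ij}`. -/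
def IsRepMeasure (d : ℕ) (β : ℕ → ℕ → ℝ) (K : Set (ℝ × ℝ)) (μ : Measure (ℝ × ℝ)) : Prop :=
  μ Kᶜ = 0 ∧ ∀ i j : ℕ, i + j ≤ d →
    Integrable (fun z : ℝ × ℝ => z.1 ^ i * z.2 ^ j) μ ∧
    β i j = ∫ z : ℝ × ℝ, z.1 ^ i * z.2 ^ j ∂μ

/-- `μ` is `r`-atomic: a sum of `r` point masses with strictly positive weights at `r`
distinct points. -/
def IsAtomicMeasure (r : ℕ) (μ : Measure (ℝ × ℝ)) : Prop :=
  ∃ (x : Fin r → ℝ × ℝ) (c : Fin r → ℝ), Function.Injective x ∧ (∀ i, 0 < c i) ∧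
    μ = ∑ i : Fin r, ENNReal.ofReal (c i) • Measure.dirac (x i)

/-- `M(n)` admits a flat extension `M(n+1)`. -/
def HasFlatExtension (n : ℕ) (β : ℕ → ℕ → ℝ) : Prop :=
  ∃ β' : ℕ → ℕ → ℝ, (∀ i j : ℕ, i + j ≤ 2*n → β' i j = β i j) ∧
    (momentMatrix (n+1) β').PosSemidef ∧
    (momentMatrix (n+1) β').rank = (momentMatrix n β).rank


lemma Matrix.mulVec_extend_zero {ι κ ι' R : Type*} [Fintype ι] [Fintype κ]
    [NonUnitalNonAssocSemiring R] (M : Matrix ι' ι R) {e : κ → ι} (he : Function.Injective e)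
    (v : κ → R) : M *ᵥ Function.extend e v 0 = M.submatrix id e *ᵥ v := by
  funext i
  refine (Fintype.sum_of_injective e he _ _ (fun j hj => ?_) fun k => ?_).symm
  · rw [Function.extend_apply' _ _ _ hj, Pi.zero_apply, mul_zero]
  · rw [he.extend_apply]
    rfl

lemma Matrix.exists_mulVec_extend_eq_of_rank_le {ι κ K : Type*} [Fintype ι] [Fintype κ] [Field K]
    (M : Matrix ι ι K) {e : κ → ι} (he : Function.Injective e)
    (h : M.rank ≤ (M.submatrix e e).rank) (u : ι → K) :
    ∃ v : κ → K, M *ᵥ Function.extend e v 0 = M *ᵥ u := by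
  have hle : LinearMap.range (M.submatrix id e).mulVecLin ≤ LinearMap.range M.mulVecLin := by
    rintro _ ⟨v, rfl⟩
    exact ⟨Function.extend e v 0, M.mulVec_extend_zero he v⟩
  have heq := Submodule.eq_of_le_of_finrank_le hle
    (h.trans (rank_submatrix_le (M.submatrix id e) e id))
  obtain ⟨v, hv⟩ : M *ᵥ u ∈ LinearMap.range (M.submatrix id e).mulVecLin :=
    heq ▸ LinearMap.mem_range_self _ u
  exact ⟨v, (M.mulVec_extend_zero he v).trans hv⟩

lemma Matrix.PosSemidef.exists_linearMap_inner_eq {ι : Type*} [Fintype ι]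
    {M : Matrix ι ι ℝ} (hM : M.PosSemidef) :
    ∃ G : (ι → ℝ) →ₗ[ℝ] EuclideanSpace ℝ ι, (∀ f g, inner ℝ (G f) (G g) = f ⬝ᵥ M *ᵥ g) ∧
      (∀ f, G f = 0 ↔ M *ᵥ f = 0) ∧ Module.finrank ℝ (LinearMap.range G) = M.rank := by
  classical
  obtain ⟨A, rfl⟩ : ∃ A : Matrix ι ι ℝ, M = star A * A := by
    open MatrixOrder in
    exact CStarAlgebra.nonneg_iff_eq_star_mul_self.mp hM.nonneg
  refine ⟨(WithLp.linearEquiv 2 ℝ (ι → ℝ)).symm.toLinearMap ∘ₗ A.mulVecLin, fun f g => ?_,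
    fun f => ?_, ?_⟩
  · rw [star_eq_conjTranspose, conjTranspose_eq_transpose_of_trivial, ← mulVec_mulVec,
      dotProduct_mulVec, vecMul_transpose, dotProduct_comm]
    simp [PiLp.inner_apply, dotProduct]
  · rw [star_eq_conjTranspose, conjTranspose_mul_self_mulVec_eq_zero]
    simp
  · rw [LinearMap.range_comp, LinearEquiv.finrank_map_eq, star_eq_conjTranspose,
      rank_conjTranspose_mul_self]
    rfl

lemma LinearMap.exists_comp_eq_of_ker_le {K V W W' : Type*} [Field K] [AddCommGroup V]
    [Module K V] [AddCommGroup W] [Module K W] [AddCommGroup W'] [Module K W']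
    {ψ : V →ₗ[K] W} (hψ : Function.Surjective ψ) (φ : V →ₗ[K] W') (h : ker ψ ≤ ker φ) :
    ∃ T : W →ₗ[K] W', T ∘ₗ ψ = φ := by
  obtain ⟨σ, hσ⟩ := ψ.exists_rightInverse_of_surjective (range_eq_top.2 hψ)
  refine ⟨φ ∘ₗ σ, ext fun v => ?_⟩
  have hv : σ (ψ v) - v ∈ ker ψ := by
    rw [mem_ker, map_sub, ← comp_apply ψ σ, hσ, id_apply, sub_self]
  simpa [sub_eq_zero] using h hv

lemma LinearMap.IsSymmetric.commute_of_inner_eq {E : Type*} [NormedAddCommGroup E]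
    [InnerProductSpace ℝ E] {X Y : E →ₗ[ℝ] E} (hX : X.IsSymmetric) (hY : Y.IsSymmetric)
    (h : ∀ u w, inner ℝ (Y u) (X w) = inner ℝ (X u) (Y w)) : Commute X Y :=
  ext fun u => ext_inner_right ℝ fun w => by
    rw [Module.End.mul_apply, Module.End.mul_apply, hX, h, ← hY]
namespace MIdx

def mk (m i j : ℕ) (h : i + j ≤ m) : MIdx m :=
  ⟨(⟨i, by omega⟩, ⟨j, by omega⟩), by simpa using h⟩

@[simp] lemma mk_fst {m i j : ℕ} (h : i + j ≤ m) : ((mk m i j h).1.1 : ℕ) = i := rfl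

@[simp] lemma mk_snd {m i j : ℕ} (h : i + j ≤ m) : ((mk m i j h).1.2 : ℕ) = j := rfl

lemma eq_mk_iff {m i j : ℕ} {h : i + j ≤ m} {q : MIdx m} :
    q = mk m i j h ↔ (q.1.1 : ℕ) = i ∧ (q.1.2 : ℕ) = j := by
  constructor
  · rintro rfl
    exact ⟨rfl, rfl⟩
  · rintro ⟨h1, h2⟩
    exact Subtype.ext (Prod.ext (Fin.ext h1) (Fin.ext h2))

lemma sum_ite_eq_mul {m : ℕ} (i j : ℕ) (F : MIdx m → ℝ) :
    ∑ q : MIdx m, (if (q.1.1 : ℕ) = i ∧ (q.1.2 : ℕ) = j then (1 : ℝ) else 0) * F q =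
      if h : i + j ≤ m then F (mk m i j h) else 0 := by
  split_ifs with h
  · simp_rw [← eq_mk_iff (h := h), ite_mul, one_mul, zero_mul]
    exact Finset.sum_ite_eq' _ _ _ |>.trans (if_pos (Finset.mem_univ _))
  · refine Finset.sum_eq_zero fun q _ => ?_
    have := q.2
    rw [if_neg (by omega), zero_mul]

def incl (n : ℕ) (p : MIdx n) : MIdx (n + 1) :=
  mk (n + 1) p.1.1 p.1.2 (by have := p.2; omega)

lemma incl_injective (n : ℕ) : Function.Injective (incl n) := fun p q h => by
  have h1 := congrArg (fun q : MIdx (n + 1) => (q.1.1 : ℕ)) h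
  have h2 := congrArg (fun q : MIdx (n + 1) => (q.1.2 : ℕ)) h
  exact Subtype.ext (Prod.ext (Fin.ext h1) (Fin.ext h2))

end MIdx

open MIdx

lemma dotProduct_momentMatrix_mulVec (m : ℕ) (γ : ℕ → ℕ → ℝ) (u v : MIdx m → ℝ) :
    u ⬝ᵥ momentMatrix m γ *ᵥ v =
      ∑ p : MIdx m, ∑ q : MIdx m, u p * v q * γ (p.1.1 + q.1.1) (p.1.2 + q.1.2) := by
  simp only [dotProduct, mulVec, Finset.mul_sum, momentMatrix]
  exact Finset.sum_congr rfl fun p _ => Finset.sum_congr rfl fun q _ => by ring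

lemma momentMatrix_transpose (m : ℕ) (γ : ℕ → ℕ → ℝ) :
    (momentMatrix m γ)ᵀ = momentMatrix m γ := by
  ext p q
  simp only [transpose_apply, momentMatrix, Nat.add_comm]

lemma dotProduct_momentMatrix_mulVec_comm (m : ℕ) (γ : ℕ → ℕ → ℝ) (u v : MIdx m → ℝ) :
    u ⬝ᵥ momentMatrix m γ *ᵥ v = v ⬝ᵥ momentMatrix m γ *ᵥ u := by
  rw [dotProduct_mulVec, ← mulVec_transpose, momentMatrix_transpose, dotProduct_comm]

lemma momentMatrix_congr {m : ℕ} {γ γ' : ℕ → ℕ → ℝ}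
    (h : ∀ s t, s + t ≤ 2 * m → γ s t = γ' s t) : momentMatrix m γ = momentMatrix m γ' := by
  ext p q
  have := p.2
  have := q.2
  exact h _ _ (by omega)

lemma momentMatrix_submatrix_incl {n : ℕ} {β β' : ℕ → ℕ → ℝ}
    (hag : ∀ i j, i + j ≤ 2 * n → β' i j = β i j) :
    (momentMatrix (n + 1) β').submatrix (incl n) (incl n) = momentMatrix n β := by
  ext p q
  have := p.2
  have := q.2
  simp only [submatrix_apply, momentMatrix, incl, mk_fst, mk_snd]
  exact hag _ _ (by omega)

lemma rank_momentMatrix_le_of_extends {n : ℕ} {β β' : ℕ → ℕ → ℝ}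
    (hag : ∀ i j, i + j ≤ 2 * n → β' i j = β i j) :
    (momentMatrix n β).rank ≤ (momentMatrix (n + 1) β').rank :=
  momentMatrix_submatrix_incl hag ▸ rank_submatrix_le _ _ _

def atomicMoments {r : ℕ} (z : Fin r → ℝ × ℝ) (c : Fin r → ℝ) (s t : ℕ) : ℝ :=
  ∑ k, c k * (z k).1 ^ s * (z k).2 ^ t

def evalMatrix (m : ℕ) {r : ℕ} (z : Fin r → ℝ × ℝ) : Matrix (Fin r) (MIdx m) ℝ :=
  of fun k p => (z k).1 ^ (p.1.1 : ℕ) * (z k).2 ^ (p.1.2 : ℕ)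

section AtomicMoments

variable {m r : ℕ} {z : Fin r → ℝ × ℝ} {c : Fin r → ℝ}

lemma momentMatrix_atomicMoments (hc : ∀ k, 0 ≤ c k) :
    momentMatrix m (atomicMoments z c) =
      (diagonal (fun k => √(c k)) * evalMatrix m z)ᴴ *
        (diagonal (fun k => √(c k)) * evalMatrix m z) := by
  ext p q
  rw [mul_apply]
  simp only [conjTranspose_apply, star_trivial, diagonal_mul, evalMatrix, of_apply,
    momentMatrix, atomicMoments, pow_add]
  refine Finset.sum_congr rfl fun k _ => ?_
  linear_combination ((z k).1 ^ (p.1.1 : ℕ) * (z k).1 ^ (q.1.1 : ℕ) * (z k).2 ^ (p.1.2 : ℕ) *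
    (z k).2 ^ (q.1.2 : ℕ)) * (Real.mul_self_sqrt (hc k)).symm

lemma posSemidef_momentMatrix_atomicMoments (hc : ∀ k, 0 ≤ c k) :
    (momentMatrix m (atomicMoments z c)).PosSemidef :=
  momentMatrix_atomicMoments hc ▸ posSemidef_conjTranspose_mul_self _

lemma rank_momentMatrix_atomicMoments_le (hc : ∀ k, 0 ≤ c k) :
    (momentMatrix m (atomicMoments z c)).rank ≤ r := by
  rw [momentMatrix_atomicMoments hc, rank_conjTranspose_mul_self]
  exact (rank_le_card_height _).trans_eq (Fintype.card_fin r)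

lemma evalMatrix_mulVec_eq_zero (hc : ∀ k, 0 < c k) {w : MIdx m → ℝ}
    (hw : momentMatrix m (atomicMoments z c) *ᵥ w = 0) : evalMatrix m z *ᵥ w = 0 := by
  rw [momentMatrix_atomicMoments fun k => (hc k).le, conjTranspose_mul_self_mulVec_eq_zero,
    ← mulVec_mulVec] at hw
  funext k
  have := congrFun hw k
  rw [mulVec_diagonal] at this
  exact (mul_eq_zero.1 this).resolve_left (Real.sqrt_pos.2 (hc k)).ne'

lemma evalMatrix_mulVec_pureVec (a b : ℝ) {i j : ℕ} (hij : i + j + 3 ≤ m) (k : Fin r) :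
    (evalMatrix m z *ᵥ pureVec m a b i j) k =
      (z k).1 ^ i * (z k).2 ^ j * ((z k).2 ^ 2 - (z k).1 ^ 3 - a * (z k).1 - b) := by
  set F : MIdx m → ℝ := fun q => (z k).1 ^ (q.1.1 : ℕ) * (z k).2 ^ (q.1.2 : ℕ)
  have hterm : ∀ q, pureVec m a b i j q * F q =
      (if (q.1.1 : ℕ) = i ∧ (q.1.2 : ℕ) = j + 2 then (1 : ℝ) else 0) * F q
        - (if (q.1.1 : ℕ) = i + 3 ∧ (q.1.2 : ℕ) = j then (1 : ℝ) else 0) * F q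
        - a * ((if (q.1.1 : ℕ) = i + 1 ∧ (q.1.2 : ℕ) = j then (1 : ℝ) else 0) * F q)
        - b * ((if (q.1.1 : ℕ) = i ∧ (q.1.2 : ℕ) = j then (1 : ℝ) else 0) * F q) := fun q => by
    simp only [pureVec]
    ring
  simp only [mulVec, dotProduct, evalMatrix, of_apply, mul_comm (_ ^ _ * _) (pureVec _ _ _ _ _ _)]
  rw [Finset.sum_congr rfl fun q _ => hterm q]
  simp only [Finset.sum_sub_distrib, ← Finset.mul_sum, sum_ite_eq_mul]
  rw [dif_pos (by omega), dif_pos (by omega), dif_pos (by omega), dif_pos (by omega)]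
  simp only [F, mk_fst, mk_snd]
  ring

end AtomicMoments

section JointSpectrum

open Module End

variable {E : Type*} [NormedAddCommGroup E] [InnerProductSpace ℝ E] {X Y : E →ₗ[ℝ] E}

lemma inner_eq_zero_of_mem_eigenspace_inf (hX : X.IsSymmetric) (hY : Y.IsSymmetric)
    {z w : ℝ × ℝ} (hzw : z ≠ w) {u u' : E} (hu : u ∈ eigenspace X z.1 ⊓ eigenspace Y z.2)
    (hu' : u' ∈ eigenspace X w.1 ⊓ eigenspace Y w.2) : inner ℝ u u' = 0 := by
  by_cases h1 : z.1 = w.1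
  · exact hY.orthogonalFamily_eigenspaces (fun h2 => hzw (Prod.ext h1 h2)) ⟨u, hu.2⟩ ⟨u', hu'.2⟩
  · exact hX.orthogonalFamily_eigenspaces h1 ⟨u, hu.1⟩ ⟨u', hu'.1⟩

lemma exists_finsupp_mem_eigenspace_inf_sum_eq [FiniteDimensional ℝ E] (hX : X.IsSymmetric)
    (hY : Y.IsSymmetric) (hXY : Commute X Y) (v : E) :
    ∃ g : (ℝ × ℝ) →₀ E, (∀ z, g z ∈ eigenspace X z.1 ⊓ eigenspace Y z.2) ∧
      ∑ z ∈ g.support, g z = v := by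
  have htop : ⨆ z : ℝ × ℝ, eigenspace X z.1 ⊓ eigenspace Y z.2 = ⊤ := by
    rw [iSup_prod]
    exact hX.iSup_iSup_eigenspace_inf_eigenspace_eq_top_of_commute hY hXY
  exact (Submodule.mem_iSup_iff_exists_finsupp _ v).1 (htop ▸ Submodule.mem_top)

theorem exists_atomicMoments_of_commute [FiniteDimensional ℝ E] (hX : X.IsSymmetric)
    (hY : Y.IsSymmetric) (hXY : Commute X Y) {v : E}
    (hv : Submodule.span ℝ (Set.range fun ij : ℕ × ℕ => (X ^ ij.1) ((Y ^ ij.2) v)) = ⊤)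
    {r : ℕ} (hr : finrank ℝ E = r) :
    ∃ (z : Fin r → ℝ × ℝ) (c : Fin r → ℝ), Function.Injective z ∧ (∀ k, 0 < c k) ∧
      ∀ i j k l, inner ℝ ((X ^ i) ((Y ^ j) v)) ((X ^ k) ((Y ^ l) v)) =
        atomicMoments z c (i + k) (j + l) := by
  obtain ⟨g, hg, rfl⟩ := exists_finsupp_mem_eigenspace_inf_sum_eq hX hY hXY v
  set S := g.support
  have hne : ∀ z : S, g z ≠ 0 := fun z => Finsupp.mem_support_iff.1 z.2
  have horth : Pairwise fun z w : S => inner ℝ (g z) (g w) = 0 := fun z w hzw =>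
    inner_eq_zero_of_mem_eigenspace_inf hX hY (Subtype.coe_ne_coe.2 hzw) (hg z) (hg w)
  have hpow : ∀ i j, (X ^ i) ((Y ^ j) (∑ z ∈ S, g z)) = ∑ z : S, ((z : ℝ × ℝ).1 ^ i *
      (z : ℝ × ℝ).2 ^ j) • g z := fun i j => by
    rw [← Finset.sum_coe_sort, map_sum, map_sum]
    refine Finset.sum_congr rfl fun z _ => ?_
    rw [HasEigenvector.pow_apply ⟨(hg z).2, hne z⟩, map_smul,
      HasEigenvector.pow_apply ⟨(hg z).1, hne z⟩, smul_smul, mul_comm]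
  have hcard : finrank ℝ E = Fintype.card S := finrank_eq_card_basis <|
    Basis.mk (linearIndependent_of_ne_zero_of_inner_eq_zero hne horth) <|
      hv.symm.le.trans <| Submodule.span_le.2 <| Set.range_subset_iff.2 fun ij => by
        rw [hpow]
        exact Submodule.sum_mem _ fun z _ =>
          Submodule.smul_mem _ _ (Submodule.subset_span ⟨z, rfl⟩)
  let e : Fin r ≃ S := (finCongr (hr.symm.trans hcard)).trans
    (Fintype.equivFin S).symm
  refine ⟨fun k => e k, fun k => ‖g (e k)‖ ^ 2, fun k l h => e.injective (Subtype.ext h),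
    fun k => pow_pos (norm_pos_iff.2 (hne _)) 2, fun i j k l => ?_⟩
  rw [hpow, hpow, sum_inner, atomicMoments, ← e.sum_comp]
  refine Finset.sum_congr rfl fun a _ => ?_
  rw [inner_sum, Finset.sum_eq_single (e a) (fun b _ hb => by
      rw [real_inner_smul_left, real_inner_smul_right, horth (Ne.symm hb), mul_zero, mul_zero])
      (fun h => absurd (Finset.mem_univ _) h),
    real_inner_smul_left, real_inner_smul_right, real_inner_self_eq_norm_sq]
  ring

end JointSpectrum

def atomicMeasure {r : ℕ} (z : Fin r → ℝ × ℝ) (c : Fin r → ℝ) : Measure (ℝ × ℝ) :=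
  ∑ k, ENNReal.ofReal (c k) • Measure.dirac (z k)

section AtomicMeasure

variable {r : ℕ} {z : Fin r → ℝ × ℝ} {c : Fin r → ℝ}

lemma integrable_atomicMeasure (f : ℝ × ℝ → ℝ) : Integrable f (atomicMeasure z c) :=
  integrable_finsetSum_measure.2 fun _ _ =>
    (integrable_dirac enorm_lt_top).smul_measure ENNReal.ofReal_ne_top

lemma integral_atomicMeasure (hc : ∀ k, 0 ≤ c k) (f : ℝ × ℝ → ℝ) :
    ∫ w, f w ∂atomicMeasure z c = ∑ k, c k * f (z k) := by
  rw [atomicMeasure, integral_finsetSum_measure fun _ _ =>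
    (integrable_dirac enorm_lt_top).smul_measure ENNReal.ofReal_ne_top]
  refine Finset.sum_congr rfl fun k _ => ?_
  rw [integral_smul_measure, integral_dirac, ENNReal.toReal_ofReal (hc k), smul_eq_mul]

lemma atomicMeasure_compl_eq_zero {K : Set (ℝ × ℝ)} (hK : MeasurableSet K) (hz : ∀ k, z k ∈ K) :
    atomicMeasure z c Kᶜ = 0 := by
  rw [atomicMeasure, Measure.finsetSum_apply]
  refine Finset.sum_eq_zero fun k _ => ?_
  rw [Measure.smul_apply, Measure.dirac_apply' _ hK.compl,
    Set.indicator_of_notMem (Set.notMem_compl_iff.2 (hz k)), smul_zero]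

lemma isRepMeasure_atomicMeasure (hc : ∀ k, 0 ≤ c k) {d : ℕ} {β : ℕ → ℕ → ℝ}
    (hβ : ∀ s t, s + t ≤ d → β s t = atomicMoments z c s t) {K : Set (ℝ × ℝ)}
    (hK : MeasurableSet K) (hz : ∀ k, z k ∈ K) : IsRepMeasure d β K (atomicMeasure z c) := by
  refine ⟨atomicMeasure_compl_eq_zero hK hz, fun s t hst => ⟨integrable_atomicMeasure _, ?_⟩⟩
  rw [integral_atomicMeasure hc, hβ s t hst, atomicMoments]
  simp only [mul_assoc]

lemma IsRepMeasure.eq_atomicMoments (hc : ∀ k, 0 ≤ c k) {d : ℕ} {β : ℕ → ℕ → ℝ}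
    {K : Set (ℝ × ℝ)} (h : IsRepMeasure d β K (atomicMeasure z c)) :
    ∀ s t, s + t ≤ d → β s t = atomicMoments z c s t := fun s t hst => by
  rw [(h.2 s t hst).2, integral_atomicMeasure hc, atomicMoments]
  simp only [mul_assoc]

end AtomicMeasure

def lowDegree (n : ℕ) : Submodule ℝ (MIdx (n + 1) → ℝ) where
  carrier := {f | ∀ q : MIdx (n + 1), (q.1.1 : ℕ) + q.1.2 = n + 1 → f q = 0}
  add_mem' hf hg q hq := by simp only [Pi.add_apply, hf q hq, hg q hq, add_zero]
  zero_mem' _ _ := rfl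
  smul_mem' c _ hf q hq := by simp only [Pi.smul_apply, hf q hq, smul_zero]

lemma apply_eq_zero_of_mem_lowDegree {n : ℕ} {f : MIdx (n + 1) → ℝ} (hf : f ∈ lowDegree n)
    {d : ℕ} (hd : d ≤ 1) (p : MIdx (n + 1)) (hp : n + 1 < p.1.1 + p.1.2 + d) : f p = 0 :=
  hf p (by have := p.2; omega)

lemma exists_lowDegree_mulVec_eq {n : ℕ} {β β' : ℕ → ℕ → ℝ}
    (hag : ∀ i j, i + j ≤ 2 * n → β' i j = β i j)
    (hrank : (momentMatrix (n + 1) β').rank ≤ (momentMatrix n β).rank) (u : MIdx (n + 1) → ℝ) :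
    ∃ f ∈ lowDegree n, momentMatrix (n + 1) β' *ᵥ f = momentMatrix (n + 1) β' *ᵥ u := by
  obtain ⟨v, hv⟩ := (momentMatrix (n + 1) β').exists_mulVec_extend_eq_of_rank_le
    (incl_injective n) (by rwa [momentMatrix_submatrix_incl hag]) u
  refine ⟨Function.extend (incl n) v 0, fun q hq => Function.extend_apply' _ _ _ ?_, hv⟩
  rintro ⟨p, rfl⟩
  have := p.2
  simp only [incl, mk_fst, mk_snd] at hq
  omega

/-- Multiplication by `x ^ dx * y ^ dy` on coefficient vectors, dropping terms of degree `> m`. -/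
def shift (m dx dy : ℕ) : Matrix (MIdx m) (MIdx m) ℝ :=
  of fun q p => if (q.1.1 : ℕ) = p.1.1 + dx ∧ (q.1.2 : ℕ) = p.1.2 + dy then 1 else 0

lemma shift_zero (m : ℕ) : shift m 0 0 = 1 := by
  ext q p
  simp only [shift, of_apply, one_apply, add_zero, Subtype.ext_iff, Prod.ext_iff, Fin.ext_iff]

lemma sum_shift_mulVec_mul {m dx dy : ℕ} {f : MIdx m → ℝ}
    (hf : ∀ p : MIdx m, m < p.1.1 + p.1.2 + (dx + dy) → f p = 0) (G : ℕ → ℕ → ℝ) :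
    ∑ q : MIdx m, (shift m dx dy *ᵥ f) q * G q.1.1 q.1.2 =
      ∑ p : MIdx m, f p * G (p.1.1 + dx) (p.1.2 + dy) := by
  simp only [mulVec, dotProduct, Finset.sum_mul, shift, of_apply]
  rw [Finset.sum_comm]
  refine Finset.sum_congr rfl fun p _ => ?_
  simp_rw [mul_right_comm _ (f p), ← Finset.sum_mul, sum_ite_eq_mul (m := m) _ _
    fun q => G q.1.1 q.1.2, mul_comm _ (f p)]
  split_ifs with h
  · rfl
  · rw [hf p (by omega), zero_mul, zero_mul]

section Shifts

variable {n : ℕ} {γ : ℕ → ℕ → ℝ} {f g : MIdx (n + 1) → ℝ}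

lemma shift_dotProduct_momentMatrix_shift (hf : f ∈ lowDegree n) (hg : g ∈ lowDegree n)
    {dx dy dx' dy' : ℕ} (hd : dx + dy ≤ 1) (hd' : dx' + dy' ≤ 1) :
    (shift (n + 1) dx dy *ᵥ f) ⬝ᵥ momentMatrix (n + 1) γ *ᵥ (shift (n + 1) dx' dy' *ᵥ g) =
      ∑ p : MIdx (n + 1), ∑ q : MIdx (n + 1),
        f p * g q * γ (p.1.1 + q.1.1 + (dx + dx')) (p.1.2 + q.1.2 + (dy + dy')) := by
  have hf' := fun p hp => apply_eq_zero_of_mem_lowDegree hf hd p hp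
  have hg' := fun p hp => apply_eq_zero_of_mem_lowDegree hg hd' p hp
  calc (shift (n + 1) dx dy *ᵥ f) ⬝ᵥ momentMatrix (n + 1) γ *ᵥ (shift (n + 1) dx' dy' *ᵥ g)
      = ∑ p : MIdx (n + 1), (shift (n + 1) dx dy *ᵥ f) p *
          ∑ q : MIdx (n + 1), (shift (n + 1) dx' dy' *ᵥ g) q *
            γ (p.1.1 + q.1.1) (p.1.2 + q.1.2) := by
        rw [dotProduct_momentMatrix_mulVec]
        simp only [Finset.mul_sum, mul_assoc]
    _ = ∑ p : MIdx (n + 1), (shift (n + 1) dx dy *ᵥ f) p *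
          ∑ q : MIdx (n + 1), g q * γ (p.1.1 + (q.1.1 + dx')) (p.1.2 + (q.1.2 + dy')) := by
        refine Finset.sum_congr rfl fun p _ => congrArg (_ * ·) ?_
        exact sum_shift_mulVec_mul hg' fun a b => γ (p.1.1 + a) (p.1.2 + b)
    _ = ∑ p : MIdx (n + 1), f p *
          ∑ q : MIdx (n + 1), g q * γ (p.1.1 + dx + (q.1.1 + dx')) (p.1.2 + dy + (q.1.2 + dy')) :=
        sum_shift_mulVec_mul hf' fun a b =>
          ∑ q : MIdx (n + 1), g q * γ (a + (q.1.1 + dx')) (b + (q.1.2 + dy'))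
    _ = _ := by
        simp only [Finset.mul_sum, mul_assoc]
        refine Finset.sum_congr rfl fun p _ => Finset.sum_congr rfl fun q _ => ?_
        ring_nf

lemma shift_dotProduct_momentMatrix (hf : f ∈ lowDegree n) (hg : g ∈ lowDegree n)
    {dx dy : ℕ} (hd : dx + dy ≤ 1) :
    (shift (n + 1) dx dy *ᵥ f) ⬝ᵥ momentMatrix (n + 1) γ *ᵥ g =
      f ⬝ᵥ momentMatrix (n + 1) γ *ᵥ (shift (n + 1) dx dy *ᵥ g) := by
  conv_lhs => rw [← one_mulVec g, ← shift_zero]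
  conv_rhs => rw [← one_mulVec f, ← shift_zero]
  rw [shift_dotProduct_momentMatrix_shift hf hg hd (by omega),
    shift_dotProduct_momentMatrix_shift hf hg (by omega) hd]
  simp only [add_zero, zero_add]

lemma momentMatrix_shift_mulVec_eq_zero
    (hspan : ∀ u, ∃ g ∈ lowDegree n, momentMatrix (n + 1) γ *ᵥ g = momentMatrix (n + 1) γ *ᵥ u)
    (hf : f ∈ lowDegree n) (h0 : momentMatrix (n + 1) γ *ᵥ f = 0) {dx dy : ℕ}
    (hd : dx + dy ≤ 1) : momentMatrix (n + 1) γ *ᵥ (shift (n + 1) dx dy *ᵥ f) = 0 := by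
  classical
  funext p
  obtain ⟨g, hg, hgp⟩ := hspan (Pi.single p 1)
  calc (momentMatrix (n + 1) γ *ᵥ (shift (n + 1) dx dy *ᵥ f)) p
      = Pi.single p 1 ⬝ᵥ momentMatrix (n + 1) γ *ᵥ (shift (n + 1) dx dy *ᵥ f) := by
        rw [single_dotProduct, one_mul]
    _ = (shift (n + 1) dx dy *ᵥ g) ⬝ᵥ momentMatrix (n + 1) γ *ᵥ f := by
        rw [dotProduct_momentMatrix_mulVec_comm, ← hgp, dotProduct_momentMatrix_mulVec_comm,
          shift_dotProduct_momentMatrix hg hf hd]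
    _ = 0 := by rw [h0, dotProduct_zero]

end Shifts

def monomialVec (m i j : ℕ) (h : i + j ≤ m) : MIdx m → ℝ := Pi.single (mk m i j h) 1

lemma monomialVec_coords {m : ℕ} (q : MIdx m) : monomialVec m q.1.1 q.1.2 q.2 = Pi.single q 1 :=
  rfl

lemma monomialVec_mem_lowDegree {n i j : ℕ} (h : i + j ≤ n) :
    monomialVec (n + 1) i j (by omega) ∈ lowDegree n := fun q hq =>
  Pi.single_eq_of_ne (fun hq' => by rw [hq', mk_fst, mk_snd] at hq; omega) _

lemma shift_mulVec_monomialVec {m dx dy i j : ℕ} (h : i + j ≤ m) (h' : i + dx + (j + dy) ≤ m) :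
    shift m dx dy *ᵥ monomialVec m i j h = monomialVec m (i + dx) (j + dy) h' := by
  funext q
  simp only [monomialVec, mulVec_single_one, col_apply, shift, of_apply, mk_fst, mk_snd,
    Pi.single_apply, eq_mk_iff]
  exact if_congr Iff.rfl rfl rfl

lemma monomialVec_dotProduct_momentMatrix_mulVec {m i j k l : ℕ} (γ : ℕ → ℕ → ℝ)
    (h : i + j ≤ m) (h' : k + l ≤ m) :
    monomialVec m i j h ⬝ᵥ momentMatrix m γ *ᵥ monomialVec m k l h' = γ (i + k) (j + l) := by
  rw [monomialVec, single_dotProduct, one_mul, monomialVec, mulVec_single_one, col_apply]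
  rfl

def IsShiftOperator {n : ℕ} (G : (MIdx (n + 1) → ℝ) →ₗ[ℝ] EuclideanSpace ℝ (MIdx (n + 1)))
    (dx dy : ℕ) (T : LinearMap.range G →ₗ[ℝ] LinearMap.range G) : Prop :=
  ∀ f ∈ lowDegree n, (T ⟨G f, LinearMap.mem_range_self G f⟩ : EuclideanSpace ℝ (MIdx (n + 1))) =
    G (shift (n + 1) dx dy *ᵥ f)

section GramSpace

variable {n : ℕ} {γ : ℕ → ℕ → ℝ} {G : (MIdx (n + 1) → ℝ) →ₗ[ℝ] EuclideanSpace ℝ (MIdx (n + 1))}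

lemma IsShiftOperator.apply_monomialVec {dx dy : ℕ} {T} (hT : IsShiftOperator G dx dy T) {i j : ℕ}
    (h : i + j ≤ n) (h' : i + dx + (j + dy) ≤ n + 1) :
    T ⟨G (monomialVec (n + 1) i j (by omega)), LinearMap.mem_range_self G _⟩ =
      ⟨G (monomialVec (n + 1) (i + dx) (j + dy) h'), LinearMap.mem_range_self G _⟩ :=
  Subtype.ext ((hT _ (monomialVec_mem_lowDegree h)).trans (by rw [shift_mulVec_monomialVec]))

lemma IsShiftOperator.pow_apply_pow_apply {X Y} (hX : IsShiftOperator G 1 0 X)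
    (hY : IsShiftOperator G 0 1 Y) {i j : ℕ} (h : i + j ≤ n + 1) :
    (X ^ i) ((Y ^ j) ⟨G (monomialVec (n + 1) 0 0 (by omega)), LinearMap.mem_range_self G _⟩) =
      ⟨G (monomialVec (n + 1) i j h), LinearMap.mem_range_self G _⟩ := by
  induction i with
  | zero =>
    rw [pow_zero, Module.End.one_apply]
    induction j with
    | zero => rfl
    | succ j ih =>
      rw [pow_succ', Module.End.mul_apply, ih (by omega)]
      exact hY.apply_monomialVec (i := 0) (by omega) (by omega)
  | succ i ih =>
    rw [pow_succ', Module.End.mul_apply, ih (by omega)]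
    exact hX.apply_monomialVec (by omega) (by omega)

lemma IsShiftOperator.span_pow_apply_pow_apply_eq_top {X Y} (hX : IsShiftOperator G 1 0 X)
    (hY : IsShiftOperator G 0 1 Y) :
    Submodule.span ℝ (Set.range fun ij : ℕ × ℕ => (X ^ ij.1) ((Y ^ ij.2)
      ⟨G (monomialVec (n + 1) 0 0 (by omega)), LinearMap.mem_range_self G _⟩)) = ⊤ := by
  refine Submodule.eq_top_iff'.2 fun ⟨_, f, hf⟩ => ?_
  have hsum : (⟨G f, LinearMap.mem_range_self G f⟩ : LinearMap.range G) =
      ∑ q : MIdx (n + 1), f q • (X ^ (q.1.1 : ℕ)) ((Y ^ (q.1.2 : ℕ))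
        ⟨G (monomialVec (n + 1) 0 0 (by omega)), LinearMap.mem_range_self G _⟩) := by
    refine Subtype.ext ?_
    rw [Submodule.coe_sum, Finset.sum_congr rfl fun q _ => by
      rw [Submodule.coe_smul, hX.pow_apply_pow_apply hY q.2, monomialVec_coords]]
    simp_rw [← map_smul, ← map_sum]
    congr 1
    ext p
    simp [Finset.sum_apply, Pi.single_apply]
  subst hf
  rw [hsum]
  exact Submodule.sum_mem _ fun q _ =>
    Submodule.smul_mem _ _ (Submodule.subset_span ⟨((q.1.1 : ℕ), (q.1.2 : ℕ)), rfl⟩)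

lemma exists_lowDegree_eq
    (hker : ∀ f, G f = 0 ↔ momentMatrix (n + 1) γ *ᵥ f = 0)
    (hcol : ∀ u, ∃ g ∈ lowDegree n, momentMatrix (n + 1) γ *ᵥ g = momentMatrix (n + 1) γ *ᵥ u)
    (u : LinearMap.range G) :
    ∃ f ∈ lowDegree n, ⟨G f, LinearMap.mem_range_self G f⟩ = u := by
  obtain ⟨_, w, rfl⟩ := u
  obtain ⟨f, hf, hfw⟩ := hcol w
  refine ⟨f, hf, Subtype.ext (sub_eq_zero.1 ?_)⟩
  rw [← map_sub, hker, mulVec_sub, hfw, sub_self]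

lemma exists_isShiftOperator
    (hker : ∀ f, G f = 0 ↔ momentMatrix (n + 1) γ *ᵥ f = 0)
    (hcol : ∀ u, ∃ g ∈ lowDegree n, momentMatrix (n + 1) γ *ᵥ g = momentMatrix (n + 1) γ *ᵥ u)
    {dx dy : ℕ} (hd : dx + dy ≤ 1) :
    ∃ T, IsShiftOperator G dx dy T := by
  let ψ := (G ∘ₗ (lowDegree n).subtype).codRestrict (LinearMap.range G)
    fun f => LinearMap.mem_range_self G f
  let φ := (G ∘ₗ (shift (n + 1) dx dy).mulVecLin ∘ₗ (lowDegree n).subtype).codRestrict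
    (LinearMap.range G) fun f => LinearMap.mem_range_self G _
  have hψ : Function.Surjective ψ := fun u => by
    obtain ⟨f, hf, hfu⟩ := exists_lowDegree_eq hker hcol u
    exact ⟨⟨f, hf⟩, hfu⟩
  have hker_le : LinearMap.ker ψ ≤ LinearMap.ker φ := fun f hf => by
    have h0 : G f = 0 := congrArg Subtype.val hf
    exact Subtype.ext ((hker _).2 (momentMatrix_shift_mulVec_eq_zero hcol f.2 ((hker _).1 h0) hd))
  obtain ⟨T, hT⟩ := LinearMap.exists_comp_eq_of_ker_le hψ φ hker_le
  exact ⟨T, fun f hf => congrArg Subtype.val (LinearMap.congr_fun hT ⟨f, hf⟩)⟩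

lemma IsShiftOperator.isSymmetric
    (hker : ∀ f, G f = 0 ↔ momentMatrix (n + 1) γ *ᵥ f = 0)
    (hcol : ∀ u, ∃ g ∈ lowDegree n, momentMatrix (n + 1) γ *ᵥ g = momentMatrix (n + 1) γ *ᵥ u)
    (hG : ∀ f g, inner ℝ (G f) (G g) = f ⬝ᵥ momentMatrix (n + 1) γ *ᵥ g)
    {dx dy : ℕ} (hd : dx + dy ≤ 1) {T}
    (hT : IsShiftOperator G dx dy T) : T.IsSymmetric := fun u w => by
  obtain ⟨f, hf, rfl⟩ := exists_lowDegree_eq hker hcol u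
  obtain ⟨g, hg, rfl⟩ := exists_lowDegree_eq hker hcol w
  rw [Submodule.coe_inner, Submodule.coe_inner, hT f hf, hT g hg, hG, hG]
  exact shift_dotProduct_momentMatrix hf hg hd

lemma IsShiftOperator.commute
    (hker : ∀ f, G f = 0 ↔ momentMatrix (n + 1) γ *ᵥ f = 0)
    (hcol : ∀ u, ∃ g ∈ lowDegree n, momentMatrix (n + 1) γ *ᵥ g = momentMatrix (n + 1) γ *ᵥ u)
    (hG : ∀ f g, inner ℝ (G f) (G g) = f ⬝ᵥ momentMatrix (n + 1) γ *ᵥ g)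
    {X Y} (hX : IsShiftOperator G 1 0 X)
    (hY : IsShiftOperator G 0 1 Y) : Commute X Y := by
  refine (hX.isSymmetric hker hcol hG le_rfl).commute_of_inner_eq
    (hY.isSymmetric hker hcol hG le_rfl) fun u w => ?_
  obtain ⟨f, hf, rfl⟩ := exists_lowDegree_eq hker hcol u
  obtain ⟨g, hg, rfl⟩ := exists_lowDegree_eq hker hcol w
  rw [Submodule.coe_inner, Submodule.coe_inner, hX f hf, hY f hf, hX g hg, hY g hg, hG, hG,
    shift_dotProduct_momentMatrix_shift hf hg le_rfl le_rfl,
    shift_dotProduct_momentMatrix_shift hf hg le_rfl le_rfl]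

end GramSpace

lemma exists_add_eq_of_add_le_two_mul {m s t : ℕ} (h : s + t ≤ 2 * m) :
    ∃ i j k l, i + j ≤ m ∧ k + l ≤ m ∧ s = i + k ∧ t = j + l := by
  rcases le_or_gt s m with hs | hs
  · exact ⟨s, min t (m - s), 0, t - min t (m - s), by omega, by omega, by omega, by omega⟩
  · exact ⟨m, 0, s - m, t, by omega, by omega, by omega, by omega⟩

theorem exists_atomicMoments_of_flat {n : ℕ} {γ : ℕ → ℕ → ℝ}
    (hpsd : (momentMatrix (n + 1) γ).PosSemidef)
    (hcol : ∀ u, ∃ g ∈ lowDegree n, momentMatrix (n + 1) γ *ᵥ g = momentMatrix (n + 1) γ *ᵥ u)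
    {r : ℕ} (hr : (momentMatrix (n + 1) γ).rank = r) :
    ∃ (z : Fin r → ℝ × ℝ) (c : Fin r → ℝ), Function.Injective z ∧ (∀ k, 0 < c k) ∧
      ∀ s t, s + t ≤ 2 * (n + 1) → γ s t = atomicMoments z c s t := by
  obtain ⟨G, hG, hker, hrank⟩ := hpsd.exists_linearMap_inner_eq
  obtain ⟨X, hX⟩ := exists_isShiftOperator hker hcol (dx := 1) (dy := 0) le_rfl
  obtain ⟨Y, hY⟩ := exists_isShiftOperator hker hcol (dx := 0) (dy := 1) le_rfl
  obtain ⟨z, c, hz, hc, hmom⟩ := exists_atomicMoments_of_commute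
    (hX.isSymmetric hker hcol hG le_rfl) (hY.isSymmetric hker hcol hG le_rfl)
    (hX.commute hker hcol hG hY) (hX.span_pow_apply_pow_apply_eq_top hY) (hrank.trans hr)
  refine ⟨z, c, hz, hc, fun s t hst => ?_⟩
  obtain ⟨i, j, k, l, hij, hkl, rfl, rfl⟩ := exists_add_eq_of_add_le_two_mul hst
  rw [← hmom, Submodule.coe_inner, hX.pow_apply_pow_apply hY hij,
    hX.pow_apply_pow_apply hY hkl, hG, monomialVec_dotProduct_momentMatrix_mulVec]

theorem hasFlatExtension_of_isRepMeasure {n : ℕ} {β : ℕ → ℕ → ℝ} {K : Set (ℝ × ℝ)}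
    {μ : Measure (ℝ × ℝ)} (hrep : IsRepMeasure (2 * n) β K μ)
    (hatom : IsAtomicMeasure (momentMatrix n β).rank μ) : HasFlatExtension n β := by
  obtain ⟨z, c, -, hc, rfl⟩ := hatom
  have hc0 := fun k => (hc k).le
  have hβ := fun s t hst => (hrep.eq_atomicMoments hc0 s t hst).symm
  exact ⟨atomicMoments z c, hβ, posSemidef_momentMatrix_atomicMoments hc0,
    le_antisymm (rank_momentMatrix_atomicMoments_le hc0) (rank_momentMatrix_le_of_extends hβ)⟩

theorem HasFlatExtension.exists_atomicMoments {n : ℕ} {β : ℕ → ℕ → ℝ}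
    (h : HasFlatExtension n β) :
    ∃ (z : Fin (momentMatrix n β).rank → ℝ × ℝ) (c : Fin (momentMatrix n β).rank → ℝ),
      Function.Injective z ∧ (∀ k, 0 < c k) ∧
        ∀ s t, s + t ≤ 2 * n → β s t = atomicMoments z c s t := by
  obtain ⟨β', hag, hpsd, hrank⟩ := h
  obtain ⟨z, c, hz, hc, hβ'⟩ :=
    exists_atomicMoments_of_flat hpsd (exists_lowDegree_mulVec_eq hag hrank.le) hrank
  exact ⟨z, c, hz, hc, fun s t hst => (hag s t hst).symm.trans (hβ' s t (by omega))⟩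

lemma IsPPure.mem_zeroSet {n : ℕ} (hn : 3 ≤ n) {a b : ℝ} {β : ℕ → ℕ → ℝ}
    (hpure : IsPPure n a b β) {r : ℕ} {z : Fin r → ℝ × ℝ} {c : Fin r → ℝ} (hc : ∀ k, 0 < c k)
    (hβ : ∀ s t, s + t ≤ 2 * n → β s t = atomicMoments z c s t) (k : Fin r) :
    z k ∈ {w : ℝ × ℝ | w.2 ^ 2 - w.1 ^ 3 - a * w.1 - b = 0} := by
  have hker : momentMatrix n β *ᵥ pureVec n a b 0 0 = 0 :=
    (hpure ▸ Submodule.subset_span ⟨0, 0, by omega, rfl⟩ :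
      pureVec n a b 0 0 ∈ {v | momentMatrix n β *ᵥ v = 0})
  rw [momentMatrix_congr hβ] at hker
  have hk := congrFun (evalMatrix_mulVec_eq_zero hc hker) k
  rwa [evalMatrix_mulVec_pureVec a b (by omega), pow_zero, pow_zero, one_mul, one_mul] at hk

theorem atomicRepMeasure_iff_flatExtension_general (n : ℕ) (hn : 3 ≤ n) (a b : ℝ) (β : ℕ → ℕ → ℝ)
    (hpure : IsPPure n a b β) :
    (∃ μ : Measure (ℝ × ℝ),
        IsRepMeasure (2*n) β {z : ℝ × ℝ | z.2^2 - z.1^3 - a * z.1 - b = 0} μ ∧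
        IsAtomicMeasure ((momentMatrix n β).rank) μ) ↔
      HasFlatExtension n β := by
  refine ⟨fun ⟨_, hrep, hatom⟩ => hasFlatExtension_of_isRepMeasure hrep hatom, fun hflat => ?_⟩
  obtain ⟨z, c, hz, hc, hβ⟩ := hflat.exists_atomicMoments
  have hK : MeasurableSet {w : ℝ × ℝ | w.2 ^ 2 - w.1 ^ 3 - a * w.1 - b = 0} :=
    measurableSet_eq_fun (by fun_prop) measurable_const
  exact ⟨atomicMeasure z c, isRepMeasure_atomicMeasure (fun k => (hc k).le) hβ hK
    (hpure.mem_zeroSet hn hc hβ), z, c, hz, hc, rfl⟩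

/-- If `M(n)` is positive semidefinite and `p`-pure, then `β` admits a
`(rank M(n))`-atomic `Z(p)`-representing measure iff `M(n)` admits a flat extension. -/
theorem atomicRepMeasure_iff_flatExtension (n : ℕ) (hn : 3 ≤ n) (a b : ℝ) (β : ℕ → ℕ → ℝ)
    (hpsd : (momentMatrix n β).PosSemidef) (hpure : IsPPure n a b β) :
    (∃ μ : Measure (ℝ × ℝ),
        IsRepMeasure (2*n) β {z : ℝ × ℝ | z.2^2 - z.1^3 - a * z.1 - b = 0} μ ∧
        IsAtomicMeasure ((momentMatrix n β).rank) μ) ↔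
      HasFlatExtension n β :=
  atomicRepMeasure_iff_flatExtension_general n hn a b β hpure

end
end

section
/- Let A be a real symmetric positive semidefinite N×N matrix and let B ⊆ {1, …, N} be a set of indices such that the columns of A indexed by B form a basis of the column space of A. Then the principal submatrix (A_{ij})_{i,j ∈ B} is positive definite; in particular it is invertible. -/
/-!
Restricting `A` to the rows and columns in `B` is the congruence `A ↦ Pᴴ A P` by the coordinate
inclusion `P`. For `x ≠ 0`, `xᴴ (Pᴴ A P) x = (P x)ᴴ A (P x)`, and since `A` is positive semidefinite
this vanishes only if `A (P x) = 0`, i.e. only if `x` is a nontrivial linear relation among the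
columns of `A` indexed by `B`.
-/

open Matrix
open scoped ComplexOrder

namespace Matrix

section Reindex

variable {α m n : Type*} [Semiring α] [Fintype n] [DecidableEq n]

lemma submatrix_eq_conjTranspose_mul_mul [StarRing α] (A : Matrix n n α) (e : m → n) :
    A.submatrix e e =
      ((1 : Matrix n n α).submatrix id e)ᴴ * A * (1 : Matrix n n α).submatrix id e := by
  ext i j
  simp [mul_apply, one_apply]

lemma mul_one_submatrix (A : Matrix n n α) (e : m → n) :
    A * (1 : Matrix n n α).submatrix id e = A.submatrix id e := by
  ext i j
  simp [mul_apply, one_apply]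

end Reindex

variable {𝕜 m n : Type*} [RCLike 𝕜] [Fintype m] [Fintype n]

lemma PosSemidef.posDef_conjTranspose_mul_mul {A : Matrix n n 𝕜} (hA : A.PosSemidef)
    {P : Matrix n m 𝕜} (hAP : Function.Injective (A * P).mulVec) : (Pᴴ * A * P).PosDef := by
  refine PosDef.of_dotProduct_mulVec_pos (isHermitian_conjTranspose_mul_mul P hA.1) fun x hx => ?_
  have hquad : star x ⬝ᵥ (Pᴴ * A * P) *ᵥ x = star (P *ᵥ x) ⬝ᵥ A *ᵥ (P *ᵥ x) := by
    simp only [star_mulVec, dotProduct_mulVec, vecMul_vecMul, mulVec_mulVec, Matrix.mul_assoc]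
  have hAPx : A *ᵥ (P *ᵥ x) ≠ 0 := by
    rw [mulVec_mulVec]
    exact fun h => hx (hAP.eq_iff' (mulVec_zero _) |>.mp h)
  rw [hquad]
  exact (hA.dotProduct_mulVec_nonneg _).lt_of_ne' (mt (hA.dotProduct_mulVec_zero_iff _).mp hAPx)

theorem PosSemidef.posDef_submatrix_of_linearIndependent {A : Matrix n n 𝕜} (hA : A.PosSemidef)
    {e : m → n} (he : LinearIndependent 𝕜 fun j => Aᵀ (e j)) : (A.submatrix e e).PosDef := by
  classical
  rw [submatrix_eq_conjTranspose_mul_mul]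
  exact hA.posDef_conjTranspose_mul_mul (by rwa [mul_one_submatrix, mulVec_injective_iff])

end Matrix

theorem posDef_principal_submatrix_of_basis_general (N : ℕ) (A : Matrix (Fin N) (Fin N) ℝ)
    (hA : A.PosSemidef) (B : Finset (Fin N))
    (hli : LinearIndependent ℝ (fun j : B => Aᵀ (j : Fin N))) :
    (A.submatrix (fun p : B => (p : Fin N)) (fun p : B => (p : Fin N))).PosDef ∧
      IsUnit (A.submatrix (fun p : B => (p : Fin N)) (fun p : B => (p : Fin N))).det := by
  have hpd := hA.posDef_submatrix_of_linearIndependent hli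
  exact ⟨hpd, isUnit_iff_ne_zero.mpr hpd.det_pos.ne'⟩

/-- If `A` is a real symmetric positive semidefinite `N×N` matrix and the
columns of `A` indexed by `B` form a basis of the column space of `A`, then the principal
submatrix `(A_{ij})_{i,j ∈ B}` is positive definite; in particular it is invertible. -/
theorem posDef_principal_submatrix_of_basis (N : ℕ) (A : Matrix (Fin N) (Fin N) ℝ)
    (hA : A.PosSemidef) (B : Finset (Fin N))
    (hli : LinearIndependent ℝ (fun j : B => Aᵀ (j : Fin N)))
    (hspan : Submodule.span ℝ (Set.range fun j : B => Aᵀ (j : Fin N)) =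
      Submodule.span ℝ (Set.range fun j : Fin N => Aᵀ j)) :
    (A.submatrix (fun p : B => (p : Fin N)) (fun p : B => (p : Fin N))).PosDef ∧
      IsUnit (A.submatrix (fun p : B => (p : Fin N)) (fun p : B => (p : Fin N))).det :=
  posDef_principal_submatrix_of_basis_general N A hA B hli
end

section
/- Let n ≥ 3 and let β be a bivariate truncated moment sequence of degree 2n whose moment matrix M(n) is positive semidefinite and p-pure, where p(x,y) = y² − x³ − ax − b. Fix arbitrary θ, φ, ψ ∈ ℝ and extend β to degree 2n+1 as in the context. Then for every s, t ≥ 0 with s + t = n + 1, the column vector C_{s,t} := (β_{s+i, t+j})_{i,j ≥ 0, i+j ≤ n} (indexed by the monomials x^i y^j with i+j ≤ n in degree-lexicographic order) lies in the column space of M(n). -/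
open MeasureTheory Matrix

noncomputable section

/-! Since `M(n)` is symmetric, its column space is the orthogonal complement of its kernel, which
by `p`-purity is spanned by the coefficient vectors of the `x^i y^j p`. Pairing such a vector with
`C_{s,t}` gives `β_{k,l+2} - β_{k+3,l} - a β_{k+1,l} - b β_{k,l}` at `(k, l) = (s+i, t+j)`. This
vanishes in degree `≤ 2n` because the same vector annihilates the rows of `M(n)`, and in degree
`2n+1` because that is how the extension is defined. -/

theorem Matrix.IsHermitian.exists_mulVec_eq {𝕜 ι : Type*} [RCLike 𝕜] [Fintype ι] [DecidableEq ι]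
    {M : Matrix ι ι 𝕜} (hM : M.IsHermitian) {w : ι → 𝕜}
    (hw : ∀ u, M *ᵥ u = 0 → star u ⬝ᵥ w = 0) : ∃ v, M *ᵥ v = w := by
  have hsymm : (toEuclideanLin M).IsSymmetric := isSymmetric_toEuclideanLin_iff.mpr hM
  have hw_range : WithLp.toLp 2 w ∈ LinearMap.range (toEuclideanLin M) := by
    rw [← hsymm.adjoint_eq, ← LinearMap.orthogonal_ker, Submodule.mem_orthogonal]
    intro u hu
    rw [EuclideanSpace.inner_eq_star_dotProduct, dotProduct_comm]
    exact hw u (congrArg WithLp.ofLp hu)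
  obtain ⟨v, hv⟩ := hw_range
  exact ⟨WithLp.ofLp v, congrArg WithLp.ofLp hv⟩

theorem momentMatrix_isHermitian (n : ℕ) (β : ℕ → ℕ → ℝ) : (momentMatrix n β).IsHermitian := by
  ext p q
  simp only [conjTranspose_apply, star_trivial, momentMatrix, add_comm]

theorem MIdx.sum_ite_mul_eq {n i j : ℕ} (h : i + j ≤ n) (f : ℕ → ℕ → ℝ) :
    ∑ q : MIdx n, (if (q.1.1 : ℕ) = i ∧ (q.1.2 : ℕ) = j then (1 : ℝ) else 0) * f q.1.1 q.1.2 =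
      f i j := by
  rw [Finset.sum_eq_single_of_mem ⟨(⟨i, by omega⟩, ⟨j, by omega⟩), h⟩ (Finset.mem_univ _)]
  · simp
  · rintro q - hq
    rw [if_neg, zero_mul]
    rintro ⟨hi, hj⟩
    exact hq (Subtype.ext (Prod.ext (Fin.ext hi) (Fin.ext hj)))

theorem pureVec_dotProduct {n i j : ℕ} (h : i + j + 3 ≤ n) (a b : ℝ) (f : ℕ → ℕ → ℝ) :
    pureVec n a b i j ⬝ᵥ (fun q => f q.1.1 q.1.2) =
      f i (j + 2) - f (i + 3) j - a * f (i + 1) j - b * f i j := by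
  simp only [dotProduct, pureVec, sub_mul, mul_assoc, Finset.sum_sub_distrib, ← Finset.mul_sum,
    MIdx.sum_ite_mul_eq (by omega : i + (j + 2) ≤ n),
    MIdx.sum_ite_mul_eq (by omega : i + 3 + j ≤ n), MIdx.sum_ite_mul_eq (by omega : i + 1 + j ≤ n),
    MIdx.sum_ite_mul_eq (by omega : i + j ≤ n)]

namespace IsPPure

variable {n : ℕ} {a b : ℝ} {β : ℕ → ℕ → ℝ}

theorem pureVec_mem_ker (hpure : IsPPure n a b β) {i j : ℕ} (h : i + j + 3 ≤ n) :
    momentMatrix n β *ᵥ pureVec n a b i j = 0 := by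
  have hmem : pureVec n a b i j ∈ (Submodule.span ℝ
      {v : MIdx n → ℝ | ∃ i j : ℕ, i + j + 3 ≤ n ∧ v = pureVec n a b i j} : Set (MIdx n → ℝ)) :=
    Submodule.subset_span ⟨i, j, h, rfl⟩
  rwa [← hpure] at hmem

theorem shifted_recurrence (hpure : IsPPure n a b β) {i j k l : ℕ} (hij : i + j + 3 ≤ n)
    (hkl : k + l ≤ n) :
    β (k + i) (l + j + 2) - β (k + i + 3) (l + j) - a * β (k + i + 1) (l + j)
      - b * β (k + i) (l + j) = 0 := by
  have hrow := congrFun (hpure.pureVec_mem_ker hij) ⟨(⟨k, by omega⟩, ⟨l, by omega⟩), hkl⟩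
  rw [mulVec, dotProduct_comm] at hrow
  exact (pureVec_dotProduct hij a b fun i' j' => β (k + i') (l + j')).symm.trans hrow

theorem recurrence (hpure : IsPPure n a b β) (hn : 3 ≤ n) {k l : ℕ} (hkl : k + l + 3 ≤ 2 * n) :
    β k (l + 2) - β (k + 3) l - a * β (k + 1) l - b * β k l = 0 := by
  -- take `i`, then `j`, as large as `i + j + 3 ≤ n` allows
  obtain ⟨i, j, k', l', rfl, rfl, hij, hkl'⟩ :
      ∃ i j k' l', k = k' + i ∧ l = l' + j ∧ i + j + 3 ≤ n ∧ k' + l' ≤ n :=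
    ⟨min k (n - 3), min l (n - 3 - min k (n - 3)), k - min k (n - 3),
      l - min l (n - 3 - min k (n - 3)), by omega, by omega, by omega, by omega⟩
  simpa [add_assoc] using hpure.shifted_recurrence hij hkl'

theorem betaExt_recurrence (hpure : IsPPure n a b β) (hn : 3 ≤ n) (θ φ ψ : ℝ) {k l : ℕ}
    (hkl : k + l + 3 ≤ 2 * n + 1) :
    betaExt n a b β θ φ ψ k (l + 2) - betaExt n a b β θ φ ψ (k + 3) l
      - a * betaExt n a b β θ φ ψ (k + 1) l - b * betaExt n a b β θ φ ψ k l = 0 := by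
  rcases Nat.lt_or_ge (k + l + 3) (2 * n + 1) with hlt | hge
  · simp (disch := omega) only [betaExt, if_pos]
    exact hpure.recurrence hn (by omega)
  · simp (disch := omega) only [betaExt, if_pos, if_neg, Nat.add_sub_cancel,
      show k + 3 - 2 = k + 1 by omega]
    ring

theorem dotProduct_eq_zero_of_mulVec_eq_zero (hpure : IsPPure n a b β) {w : MIdx n → ℝ}
    (hw : ∀ i j, i + j + 3 ≤ n → pureVec n a b i j ⬝ᵥ w = 0) {u : MIdx n → ℝ}
    (hu : momentMatrix n β *ᵥ u = 0) : u ⬝ᵥ w = 0 := by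
  have hu_span : u ∈ Submodule.span ℝ {v | ∃ i j, i + j + 3 ≤ n ∧ v = pureVec n a b i j} := by
    change u ∈ {v | momentMatrix n β *ᵥ v = 0} at hu
    rwa [hpure] at hu
  clear hu
  induction hu_span using Submodule.span_induction with
  | mem v hv =>
    obtain ⟨i, j, hij, rfl⟩ := hv
    exact hw i j hij
  | zero => exact zero_dotProduct w
  | add v v' _ _ hv hv' => rw [add_dotProduct, hv, hv', add_zero]
  | smul c v _ hv => rw [smul_dotProduct, hv, smul_zero]

end IsPPure

theorem extended_columns_in_columnSpace_general (n : ℕ) (a b : ℝ) (β : ℕ → ℕ → ℝ)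
    (hpure : IsPPure n a b β) (θ φ ψ : ℝ) :
    ∀ s t : ℕ, s + t = n + 1 →
      ∃ v : MIdx n → ℝ, (momentMatrix n β).mulVec v =
        fun q : MIdx n =>
          betaExt n a b β θ φ ψ (s + (q.1.1 : ℕ)) (t + (q.1.2 : ℕ)) := by
  intro s t hst
  refine (momentMatrix_isHermitian n β).exists_mulVec_eq fun u hu => ?_
  rw [star_trivial]
  refine hpure.dotProduct_eq_zero_of_mulVec_eq_zero (fun i j hij => ?_) hu
  refine (pureVec_dotProduct hij a b fun i j => betaExt n a b β θ φ ψ (s + i) (t + j)).trans ?_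
  exact hpure.betaExt_recurrence (k := s + i) (l := t + j) (by omega) θ φ ψ (by omega)

/-- If `M(n)` is positive semidefinite and `p`-pure, then for every
`s + t = n + 1`, the column vector `C_{s,t} = (β_{s+i, t+j})_{i+j ≤ n}` of the extended
sequence lies in the column space of `M(n)`. -/
theorem extended_columns_in_columnSpace (n : ℕ) (hn : 3 ≤ n) (a b : ℝ) (β : ℕ → ℕ → ℝ)
    (hpsd : (momentMatrix n β).PosSemidef) (hpure : IsPPure n a b β) (θ φ ψ : ℝ) :
    ∀ s t : ℕ, s + t = n + 1 →
      ∃ v : MIdx n → ℝ, (momentMatrix n β).mulVec v =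
        fun q : MIdx n =>
          betaExt n a b β θ φ ψ (s + (q.1.1 : ℕ)) (t + (q.1.2 : ℕ)) :=
  extended_columns_in_columnSpace_general n a b β hpure θ φ ψ

end
end

section
/- Let n ≥ 3, a, b ∈ ℝ, p(x,y) = y² − x³ − ax − b, Z(p) = {(x,y) ∈ ℝ² : p(x,y) = 0}, and let β be a bivariate truncated moment sequence of degree 2n satisfying β_{ij} = 0 whenever j is odd. Then β admits a Z(p)-representing measure if and only if there exists a positive Borel measure ν on ℝ with supp(ν) ⊆ {x ∈ ℝ : x³ + ax + b ≥ 0} such that β_{i, 2j} = ∫ x^i (x³ + ax + b)^j dν(x) for all i, j ≥ 0 with i + 2j ≤ 2n. -/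
/-!
Since `β` is supported on `y² = q(x)` with `q(x) = x³ + ax + b`, every even moment
`β_{i,2j}` only sees `x^i q(x)^j`, so pushing a representing measure forward along
`(x, y) ↦ x` gives `ν`. Conversely, given `ν`, spreading its mass evenly over the two points
`(x, ±√q(x))` gives a measure on the curve whose even moments are those of `ν` and whose odd
moments vanish, as the odd moments of `β` do. Integrability of the mixed monomials
`x^i √q(x)^j` comes from `u^i v^j ≤ 1 + u^d + v^d` for `u, v ≥ 0`, `i + j ≤ d`.
-/

open MeasureTheory

noncomputable section

lemma pow_mul_pow_le_one_add_pow_add_pow {u v : ℝ} (hu : 0 ≤ u) (hv : 0 ≤ v) {i j d : ℕ}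
    (h : i + j ≤ d) : u ^ i * v ^ j ≤ 1 + u ^ d + v ^ d := by
  set M := max 1 (max u v)
  have hM : 1 ≤ M := le_max_left _ _
  calc u ^ i * v ^ j ≤ M ^ i * M ^ j := by
        gcongr
        · exact (le_max_left u v).trans (le_max_right _ _)
        · exact (le_max_right u v).trans (le_max_right _ _)
    _ = M ^ (i + j) := (pow_add M i j).symm
    _ ≤ M ^ d := pow_le_pow_right₀ hM h
    _ ≤ 1 + u ^ d + v ^ d := by
        have := pow_nonneg hu d
        have := pow_nonneg hv d
        rcases max_cases 1 (max u v) with ⟨hM1, -⟩ | ⟨hM1, -⟩ <;>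
          rcases max_cases u v with ⟨huv, -⟩ | ⟨huv, -⟩ <;>
          simp only [M, hM1, huv, one_pow] <;> linarith

section CurveMoments

variable {q : ℝ → ℝ} {μ : Measure (ℝ × ℝ)} {ν : Measure ℝ}

lemma map_fst_compl_nonneg (hq : Measurable q)
    (hμ : μ {z : ℝ × ℝ | z.2 ^ 2 = q z.1}ᶜ = 0) : μ.map Prod.fst {x | 0 ≤ q x}ᶜ = 0 := by
  rw [Measure.map_apply measurable_fst (measurableSet_le measurable_const hq).compl]
  exact measure_mono_null
    (fun z (hz : ¬0 ≤ q z.1) (hcurve : z.2 ^ 2 = q z.1) => hz (hcurve ▸ sq_nonneg z.2)) hμ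

lemma integrable_and_integral_map_fst (hq : Measurable q)
    (hμ : μ {z : ℝ × ℝ | z.2 ^ 2 = q z.1}ᶜ = 0) {i j : ℕ}
    (hint : Integrable (fun z : ℝ × ℝ => z.1 ^ i * z.2 ^ (2 * j)) μ) :
    Integrable (fun x => x ^ i * q x ^ j) (μ.map Prod.fst) ∧
      ∫ x, x ^ i * q x ^ j ∂μ.map Prod.fst = ∫ z, z.1 ^ i * z.2 ^ (2 * j) ∂μ := by
  have heq : (fun z : ℝ × ℝ => z.1 ^ i * z.2 ^ (2 * j)) =ᵐ[μ] fun z => z.1 ^ i * q z.1 ^ j := by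
    filter_upwards [measure_eq_zero_iff_ae_notMem.mp hμ] with z hz
    rw [pow_mul, not_not.mp hz]
  have hm : AEStronglyMeasurable (fun x => x ^ i * q x ^ j) (μ.map Prod.fst) := by fun_prop
  exact ⟨(integrable_map_measure hm (by fun_prop)).mpr (hint.congr heq),
    (integral_map (by fun_prop) hm).trans (integral_congr_ae heq).symm⟩

def symmLift (q : ℝ → ℝ) (ν : Measure ℝ) : Measure (ℝ × ℝ) :=
  (2 : ENNReal)⁻¹ • (ν.map (fun x => (x, √(q x))) + ν.map (fun x => (x, -√(q x))))

lemma symmLift_compl_curve (hq : Measurable q) (hν : ν {x | 0 ≤ q x}ᶜ = 0) :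
    symmLift q ν {z : ℝ × ℝ | z.2 ^ 2 = q z.1}ᶜ = 0 := by
  have hcurve : MeasurableSet {z : ℝ × ℝ | z.2 ^ 2 = q z.1} := by measurability
  have hbranch : ∀ s : ℝ → ℝ, (∀ x, 0 ≤ q x → s x ^ 2 = q x) → Measurable s →
      ν.map (fun x => (x, s x)) {z : ℝ × ℝ | z.2 ^ 2 = q z.1}ᶜ = 0 := by
    intro s hs hsm
    rw [Measure.map_apply (by fun_prop) hcurve.compl]
    exact measure_mono_null (fun x hx hqx => hx (hs x hqx)) hν
  simp only [symmLift, Measure.smul_apply, Measure.add_apply,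
    hbranch _ (fun x hx => Real.sq_sqrt hx) (by fun_prop),
    hbranch _ (fun x hx => by rw [neg_sq, Real.sq_sqrt hx]) (by fun_prop), add_zero, smul_zero]

lemma integrable_symmLift {f : ℝ × ℝ → ℝ} (hq : Measurable q) (hf : Measurable f)
    (hp : Integrable (fun x => f (x, √(q x))) ν) (hm : Integrable (fun x => f (x, -√(q x))) ν) :
    Integrable f (symmLift q ν) := by
  refine Integrable.smul_measure (Integrable.add_measure ?_ ?_) (by simp)
  · exact (integrable_map_measure hf.aestronglyMeasurable (by fun_prop)).mpr hp
  · exact (integrable_map_measure hf.aestronglyMeasurable (by fun_prop)).mpr hm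

lemma integral_symmLift {f : ℝ × ℝ → ℝ} (hq : Measurable q) (hf : Measurable f)
    (hp : Integrable (fun x => f (x, √(q x))) ν) (hm : Integrable (fun x => f (x, -√(q x))) ν) :
    ∫ z, f z ∂symmLift q ν = (∫ x, f (x, √(q x)) ∂ν + ∫ x, f (x, -√(q x)) ∂ν) / 2 := by
  have hp' := (integrable_map_measure hf.aestronglyMeasurable (by fun_prop)).mpr hp
  have hm' := (integrable_map_measure hf.aestronglyMeasurable (by fun_prop)).mpr hm
  rw [symmLift, integral_smul_measure, integral_add_measure hp' hm',
    integral_map (by fun_prop) hf.aestronglyMeasurable,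
    integral_map (by fun_prop) hf.aestronglyMeasurable]
  simp only [ENNReal.toReal_inv, ENNReal.toReal_ofNat, smul_eq_mul]
  ring

lemma integrable_mul_sqrt_pow {d : ℕ} (hq : Measurable q) (hν : ν {x | 0 ≤ q x}ᶜ = 0)
    (hint : ∀ i j : ℕ, i + 2 * j ≤ 2 * d → Integrable (fun x => x ^ i * q x ^ j) ν)
    {i j : ℕ} (hij : i + j ≤ 2 * d) : Integrable (fun x => x ^ i * √(q x) ^ j) ν := by
  have hsq : (fun x => q x ^ d) =ᵐ[ν] fun x => √(q x) ^ (2 * d) := by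
    filter_upwards [measure_eq_zero_iff_ae_notMem.mp hν] with x hx
    rw [pow_mul, Real.sq_sqrt (not_not.mp hx)]
  have hbound : Integrable (fun x => 1 + |x| ^ (2 * d) + √(q x) ^ (2 * d)) ν := by
    have h1 : Integrable (fun _ : ℝ => (1 : ℝ)) ν := by simpa using hint 0 0 (by omega)
    have hx : Integrable (fun x : ℝ => |x| ^ (2 * d)) ν := by
      simpa [pow_mul, sq_abs] using hint (2 * d) 0 (by omega)
    have hs : Integrable (fun x => √(q x) ^ (2 * d)) ν := by
      simpa using (hint 0 d (by omega)).congr (by simpa using hsq)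
    exact (h1.add hx).add hs
  refine hbound.mono' (by fun_prop) (Filter.Eventually.of_forall fun x => ?_)
  rw [Real.norm_eq_abs, abs_mul, abs_pow, abs_pow, abs_of_nonneg (Real.sqrt_nonneg _)]
  exact pow_mul_pow_le_one_add_pow_add_pow (abs_nonneg x) (Real.sqrt_nonneg _) hij

lemma integrable_symmLift_mul_pow (hq : Measurable q) {i j : ℕ}
    (hint : Integrable (fun x => x ^ i * √(q x) ^ j) ν) :
    Integrable (fun z : ℝ × ℝ => z.1 ^ i * z.2 ^ j) (symmLift q ν) := by
  refine integrable_symmLift hq (by fun_prop) hint ?_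
  have hneg : (fun x => x ^ i * (-√(q x)) ^ j) = fun x => (-1) ^ j * (x ^ i * √(q x) ^ j) := by
    funext x
    rw [neg_pow]
    ring
  simpa only [hneg] using hint.const_mul _

lemma integral_symmLift_mul_pow_two_mul (hq : Measurable q) (hν : ν {x | 0 ≤ q x}ᶜ = 0)
    {i m : ℕ} (hint : Integrable (fun x => x ^ i * q x ^ m) ν) :
    ∫ z, z.1 ^ i * z.2 ^ (2 * m) ∂symmLift q ν = ∫ x, x ^ i * q x ^ m ∂ν := by
  have hp : (fun x => x ^ i * √(q x) ^ (2 * m)) =ᵐ[ν] fun x => x ^ i * q x ^ m := by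
    filter_upwards [measure_eq_zero_iff_ae_notMem.mp hν] with x hx
    rw [pow_mul, Real.sq_sqrt (not_not.mp hx)]
  have hm : (fun x => x ^ i * (-√(q x)) ^ (2 * m)) =ᵐ[ν] fun x => x ^ i * q x ^ m := by
    simpa only [pow_mul, neg_sq] using hp
  rw [integral_symmLift hq (by fun_prop) (hint.congr hp.symm) (hint.congr hm.symm),
    integral_congr_ae hp, integral_congr_ae hm]
  ring

lemma integral_symmLift_mul_pow_of_odd (hq : Measurable q) {i j : ℕ} (hj : Odd j)
    (hint : Integrable (fun x => x ^ i * √(q x) ^ j) ν) :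
    ∫ z, z.1 ^ i * z.2 ^ j ∂symmLift q ν = 0 := by
  have hneg : (fun x => x ^ i * (-√(q x)) ^ j) = fun x => -(x ^ i * √(q x) ^ j) := by
    funext x
    rw [hj.neg_pow]
    ring
  rw [integral_symmLift hq (by fun_prop) hint (by simpa only [hneg] using hint.fun_neg)]
  simp only [hneg, integral_neg, add_neg_cancel, zero_div]

end CurveMoments

theorem symmetric_TMP_reduction_general (n : ℕ) (a b : ℝ) (β : ℕ → ℕ → ℝ)
    (hsym : ∀ i j : ℕ, i + j ≤ 2*n → Odd j → β i j = 0) :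
    (∃ μ : Measure (ℝ × ℝ),
        IsRepMeasure (2*n) β {z : ℝ × ℝ | z.2^2 - z.1^3 - a * z.1 - b = 0} μ) ↔
      (∃ ν : Measure ℝ, ν {x : ℝ | 0 ≤ x^3 + a * x + b}ᶜ = 0 ∧
        ∀ i j : ℕ, i + 2*j ≤ 2*n →
          Integrable (fun x : ℝ => x ^ i * (x^3 + a * x + b) ^ j) ν ∧
          β i (2*j) = ∫ x : ℝ, x ^ i * (x^3 + a * x + b) ^ j ∂ν) := by
  have hq : Measurable fun x : ℝ => x ^ 3 + a * x + b := by fun_prop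
  have hcurve : {z : ℝ × ℝ | z.2^2 - z.1^3 - a * z.1 - b = 0} =
      {z : ℝ × ℝ | z.2 ^ 2 = z.1 ^ 3 + a * z.1 + b} := by
    ext z
    simp only [Set.mem_ofPred_eq, sub_sub, sub_eq_zero, add_assoc]
  simp only [IsRepMeasure, hcurve]
  constructor
  · rintro ⟨μ, hμ, hmom⟩
    refine ⟨μ.map Prod.fst, map_fst_compl_nonneg hq hμ, fun i j hij => ?_⟩
    obtain ⟨hint, hβ⟩ := hmom i (2 * j) (by omega)
    obtain ⟨hint', heq⟩ := integrable_and_integral_map_fst hq hμ hint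
    exact ⟨hint', hβ.trans heq.symm⟩
  · rintro ⟨ν, hν, hmom⟩
    have hint := fun i j (hij : i + j ≤ 2 * n) =>
      integrable_mul_sqrt_pow hq hν (fun i j h => (hmom i j h).1) hij
    refine ⟨symmLift _ ν, symmLift_compl_curve hq hν,
      fun i j hij => ⟨integrable_symmLift_mul_pow hq (hint i j hij), ?_⟩⟩
    rcases Nat.even_or_odd' j with ⟨m, rfl | rfl⟩
    · obtain ⟨hintm, hβ⟩ := hmom i m hij
      exact hβ.trans (integral_symmLift_mul_pow_two_mul hq hν hintm).symm
    · exact (hsym i _ hij ⟨m, rfl⟩).trans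
        (integral_symmLift_mul_pow_of_odd hq ⟨m, rfl⟩ (hint i _ hij)).symm

/-- For a symmetric degree-`2n` sequence `β` (all moments of odd degree in
`y` vanish), `β` admits a `Z(p)`-representing measure for `p = y² - x³ - ax - b` iff there
is a positive Borel measure `ν` on `ℝ` supported in `{x : x³ + ax + b ≥ 0}` with
`β_{i,2j} = ∫ x^i (x³ + ax + b)^j dν` for all `i + 2j ≤ 2n`. -/
theorem symmetric_TMP_reduction (n : ℕ) (hn : 3 ≤ n) (a b : ℝ) (β : ℕ → ℕ → ℝ)
    (hsym : ∀ i j : ℕ, i + j ≤ 2*n → Odd j → β i j = 0) :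
    (∃ μ : Measure (ℝ × ℝ),
        IsRepMeasure (2*n) β {z : ℝ × ℝ | z.2^2 - z.1^3 - a * z.1 - b = 0} μ) ↔
      (∃ ν : Measure ℝ, ν {x : ℝ | 0 ≤ x^3 + a * x + b}ᶜ = 0 ∧
        ∀ i j : ℕ, i + 2*j ≤ 2*n →
          Integrable (fun x : ℝ => x ^ i * (x^3 + a * x + b) ^ j) ν ∧
          β i (2*j) = ∫ x : ℝ, x ^ i * (x^3 + a * x + b) ^ j ∂ν) :=
  symmetric_TMP_reduction_general n a b β hsym

end
end

section
/- Let n ≥ 1, let S ⊆ ℝ be closed, and let (β̂_{ij})_{i,j ≥ 0, i+2j ≤ 2n} be real numbers. There exists a positive Borel measure μ on ℝ² with supp(μ) ⊆ {(x, x³) : x ∈ S} and β̂_{ij} = ∫ x^i u^j dμ(x,u) for all i, j ≥ 0 with i + 2j ≤ 2n if and only if there exists a positive Borel measure ν on ℝ with supp(ν) ⊆ S and β̂_{ij} = ∫ t^{i+3j} dν(t) for all i, j ≥ 0 with i + 2j ≤ 2n. -/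
open MeasureTheory

/-!
Pushing a measure `ν` on `ℝ` forward along `t ↦ (t, t³)` gives a measure on the curve, and every
measure `μ` carried by the curve is the pushforward of its first marginal. Since `t ↦ (t, t³)` is
a measurable embedding, these two operations match supports over `S` and turn the moment
`∫ x^i u^j dμ` into `∫ t^(i + 3j) dν`.
-/

section Graph

variable {α β : Type*} [MeasurableSpace α] [MeasurableSpace β] {f : α → β}

theorem measurableEmbedding_graph [MeasurableEq β] (hf : Measurable f) :
    MeasurableEmbedding fun a => (a, f a) := by
  have hrange : Set.range (fun a => (a, f a)) = {z : α × β | z.2 = f z.1} := by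
    ext ⟨a, b⟩
    simp [eq_comm]
  refine .of_measurable_inverse (measurable_id.prodMk hf) ?_ measurable_fst fun _ => rfl
  exact hrange ▸ measurableSet_eq_fun measurable_snd (hf.comp measurable_fst)

theorem map_graph_apply_compl_graphOn [MeasurableEq β] (hf : Measurable f) (ν : Measure α)
    (S : Set α) : ν.map (fun a => (a, f a)) {z | z.1 ∈ S ∧ z.2 = f z.1}ᶜ = ν Sᶜ := by
  rw [(measurableEmbedding_graph hf).map_apply]
  congr 1
  ext
  simp

theorem map_graph_map_fst (hf : Measurable f) {μ : Measure (α × β)}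
    (hμ : ∀ᵐ z ∂μ, z.2 = f z.1) : (μ.map Prod.fst).map (fun a => (a, f a)) = μ := by
  have hgraph : Measurable fun a => (a, f a) := measurable_id.prodMk hf
  rw [Measure.map_map hgraph measurable_fst]
  conv_rhs => rw [← Measure.map_id (μ := μ)]
  exact Measure.map_congr (hμ.mono fun z hz => Prod.ext rfl hz.symm)

theorem exists_measure_graphOn_iff [MeasurableEq β] (hf : Measurable f) (S : Set α)
    (P : Measure (α × β) → Prop) :
    (∃ μ : Measure (α × β), μ {z | z.1 ∈ S ∧ z.2 = f z.1}ᶜ = 0 ∧ P μ) ↔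
      ∃ ν : Measure α, ν Sᶜ = 0 ∧ P (ν.map fun a => (a, f a)) := by
  constructor
  · rintro ⟨μ, hμ, hP⟩
    have hae : ∀ᵐ z ∂μ, z.2 = f z.1 :=
      measure_mono_null (t := {z | z.1 ∈ S ∧ z.2 = f z.1}ᶜ) (fun _ hz hG => hz hG.2) hμ
    have hgraph : (μ.map Prod.fst).map (fun a => (a, f a)) = μ := map_graph_map_fst hf hae
    refine ⟨μ.map Prod.fst, ?_, by rwa [hgraph]⟩
    rw [← map_graph_apply_compl_graphOn hf, hgraph, hμ]
  · rintro ⟨ν, hν, hP⟩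
    exact ⟨_, (map_graph_apply_compl_graphOn hf ν S).trans hν, hP⟩

end Graph

theorem curve_reduction_general (n : ℕ) (S : Set ℝ)
    (βh : ℕ → ℕ → ℝ) :
    (∃ μ : Measure (ℝ × ℝ), μ {z : ℝ × ℝ | z.1 ∈ S ∧ z.2 = z.1^3}ᶜ = 0 ∧
        ∀ i j : ℕ, i + 2*j ≤ 2*n →
          Integrable (fun z : ℝ × ℝ => z.1 ^ i * z.2 ^ j) μ ∧
          βh i j = ∫ z : ℝ × ℝ, z.1 ^ i * z.2 ^ j ∂μ) ↔
      (∃ ν : Measure ℝ, ν Sᶜ = 0 ∧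
        ∀ i j : ℕ, i + 2*j ≤ 2*n →
          Integrable (fun t : ℝ => t ^ (i + 3*j)) ν ∧
          βh i j = ∫ t : ℝ, t ^ (i + 3*j) ∂ν) := by
  have hcube : Measurable fun t : ℝ => t ^ 3 := measurable_id.pow_const 3
  refine (exists_measure_graphOn_iff hcube S _).trans <|
    exists_congr fun ν => and_congr_right fun _ => forall₃_congr fun i j _ => ?_
  rw [(measurableEmbedding_graph hcube).integrable_map_iff,
    (measurableEmbedding_graph hcube).integral_map]
  simp only [Function.comp_def, ← pow_mul, ← pow_add]

/-- For closed `S ⊆ ℝ`, a family `(β̂_{ij})_{i+2j ≤ 2n}` has a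
representing measure on the curve `{(x, x³) : x ∈ S}` (with moments `∫ x^i u^j dμ`) iff it
has a representing measure `ν` on `ℝ` supported in `S` with `β̂_{ij} = ∫ t^{i+3j} dν`. -/
theorem curve_reduction (n : ℕ) (hn : 1 ≤ n) (S : Set ℝ) (hS : IsClosed S)
    (βh : ℕ → ℕ → ℝ) :
    (∃ μ : Measure (ℝ × ℝ), μ {z : ℝ × ℝ | z.1 ∈ S ∧ z.2 = z.1^3}ᶜ = 0 ∧
        ∀ i j : ℕ, i + 2*j ≤ 2*n →
          Integrable (fun z : ℝ × ℝ => z.1 ^ i * z.2 ^ j) μ ∧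
          βh i j = ∫ z : ℝ × ℝ, z.1 ^ i * z.2 ^ j ∂μ) ↔
      (∃ ν : Measure ℝ, ν Sᶜ = 0 ∧
        ∀ i j : ℕ, i + 2*j ≤ 2*n →
          Integrable (fun t : ℝ => t ^ (i + 3*j)) ν ∧
          βh i j = ∫ t : ℝ, t ^ (i + 3*j) ∂ν) :=
  curve_reduction_general n S βh
end

section
/- Let n ≥ 1 and let β = (β_{ij})_{i,j ≥ 0, i+j ≤ 2n} be a bivariate truncated moment sequence of degree 2n. There exists a positive Borel measure μ on ℝ² with supp(μ) ⊆ {(x,y) ∈ ℝ² : y² = x³} and β_{ij} = ∫ x^i y^j dμ for all i, j ≥ 0 with i + j ≤ 2n if and only if there exists a positive Borel measure ν on ℝ with β_{ij} = ∫ t^{2i+3j} dν(t) for all i, j ≥ 0 with i + j ≤ 2n. -/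
open MeasureTheory

private lemma cusp_pow_key (x y : ℝ) (h : y^2 = x^3) (i j : ℕ) :
    (if x = 0 then (0:ℝ) else y / x) ^ (2*i + 3*j) = x ^ i * y ^ j := by
  by_cases hx : x = 0
  · have hy : y = 0 := by
      have h0 : y ^ 2 = 0 := by simp [h, hx]
      exact pow_eq_zero_iff (by norm_num) |>.mp h0
    subst hx; subst hy
    simp only [if_true]
    by_cases hij : 2*i + 3*j = 0
    · have hi : i = 0 := by omega
      have hj : j = 0 := by omega
      simp [hi, hj]
    · have hij' : i ≠ 0 ∨ j ≠ 0 := by omega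
      rcases hij' with hi | hj
      · simp [zero_pow hij, zero_pow hi]
      · simp [zero_pow hij, zero_pow hj]
  · simp only [hx, if_false]
    have ht2 : (y/x)^2 = x := by
      field_simp
      nlinarith [h]
    have ht3 : (y/x)^3 = y := by
      field_simp
      linear_combination y * h
    calc (y/x) ^ (2*i + 3*j) = ((y/x)^2)^i * ((y/x)^3)^j := by
          rw [← pow_mul, ← pow_mul, ← pow_add]
      _ = x ^ i * y ^ j := by rw [ht2, ht3]

/-- A bivariate truncated moment sequence `β` of degree `2n` has a
representing measure supported on the curve `y² = x³` iff there is a positive Borel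
measure `ν` on `ℝ` with `β_{ij} = ∫ t^{2i+3j} dν` for all `i + j ≤ 2n`. -/
theorem cuspCurve_reduction (n : ℕ) (hn : 1 ≤ n) (β : ℕ → ℕ → ℝ) :
    (∃ μ : Measure (ℝ × ℝ), μ {z : ℝ × ℝ | z.2^2 = z.1^3}ᶜ = 0 ∧
        ∀ i j : ℕ, i + j ≤ 2*n →
          Integrable (fun z : ℝ × ℝ => z.1 ^ i * z.2 ^ j) μ ∧
          β i j = ∫ z : ℝ × ℝ, z.1 ^ i * z.2 ^ j ∂μ) ↔
      (∃ ν : Measure ℝ,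
        ∀ i j : ℕ, i + j ≤ 2*n →
          Integrable (fun t : ℝ => t ^ (2*i + 3*j)) ν ∧
          β i j = ∫ t : ℝ, t ^ (2*i + 3*j) ∂ν) := by
  constructor
  · rintro ⟨μ, hμc, hμ⟩
    set g : ℝ × ℝ → ℝ := fun z => if z.1 = 0 then 0 else z.2 / z.1 with hg
    have hgm : Measurable g := by
      apply Measurable.ite (measurableSet_eq_fun measurable_fst measurable_const)
        measurable_const
      exact measurable_snd.div measurable_fst
    refine ⟨μ.map g, fun i j hij => ?_⟩
    obtain ⟨hint, hval⟩ := hμ i j hij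
    have haec : ∀ᵐ z ∂μ, z.2^2 = z.1^3 := by
      rw [ae_iff]
      exact hμc
    have hae : ∀ᵐ z ∂μ, (g z) ^ (2*i+3*j) = z.1 ^ i * z.2 ^ j := by
      filter_upwards [haec] with z hz
      exact cusp_pow_key z.1 z.2 hz i j
    have hint' : Integrable (fun z => (g z)^(2*i+3*j)) μ :=
      hint.congr (hae.mono fun z hz => hz.symm)
    have hmeas : AEStronglyMeasurable (fun t : ℝ => t ^ (2*i+3*j)) (μ.map g) :=
      (measurable_id.pow_const _).aestronglyMeasurable
    constructor
    · rw [integrable_map_measure hmeas hgm.aemeasurable]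
      exact hint'
    · rw [integral_map hgm.aemeasurable hmeas, hval]
      exact (integral_congr_ae hae).symm
  · rintro ⟨ν, hν⟩
    set f : ℝ → ℝ × ℝ := fun t => (t^2, t^3) with hf
    have hfm : Measurable f :=
      (measurable_id.pow_const 2).prodMk (measurable_id.pow_const 3)
    have hset : MeasurableSet {z : ℝ × ℝ | z.2^2 = z.1^3} :=
      measurableSet_eq_fun (measurable_snd.pow_const 2) (measurable_fst.pow_const 3)
    refine ⟨ν.map f, ?_, fun i j hij => ?_⟩
    · rw [Measure.map_apply hfm hset.compl]
      have hpre : f ⁻¹' {z : ℝ × ℝ | z.2^2 = z.1^3}ᶜ = ∅ := by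
        ext t
        simp only [Set.mem_preimage, Set.mem_compl_iff, Set.mem_setOf_eq,
          Set.mem_empty_iff_false, iff_false, not_not, hf]
        ring
      rw [hpre, measure_empty]
    · obtain ⟨hint, hval⟩ := hν i j hij
      have hpt : ∀ t : ℝ, (f t).1 ^ i * (f t).2 ^ j = t ^ (2*i+3*j) := by
        intro t
        simp only [hf]
        rw [← pow_mul, ← pow_mul, ← pow_add]
      have hmeas : AEStronglyMeasurable (fun z : ℝ × ℝ => z.1^i * z.2^j) (ν.map f) :=
        ((measurable_fst.pow_const i).mul (measurable_snd.pow_const j)).aestronglyMeasurable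
      constructor
      · rw [integrable_map_measure hmeas hfm.aemeasurable]
        exact hint.congr (Filter.Eventually.of_forall fun t => (hpt t).symm)
      · rw [integral_map hfm.aemeasurable hmeas, hval]
        exact integral_congr_ae (Filter.Eventually.of_forall fun t => (hpt t).symm)
end
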